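/- arXiv:2211.04322 — 4 statements merged into one kernel-verified Lean document; each statement's English description precedes it below -/
import Mathlib

section
/- Let 𝒮 be a split system on a finite set X with |X| ≥ 5. Then 𝒮 both 4-dices and 5-dices X if and only if for all distinct 3-subsets A, B of X with A ∩ B ≠ ∅ there exists S ∈ 𝒮 with φ_A(S) ≠ φ_B(S). -/
namespace InjectiveSplitSystems

open Finset

variable {α : Type*} [DecidableEq α]

/-- A split of `X`: an unordered bipartition of `X` into two nonempty disjoint parts,
represented as the two-element set `{A, B}` of its parts. -/
def IsSplit (X : Finset α) (S : Finset (Finset α)) : Prop :=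
  ∃ A B : Finset α, S = {A, B} ∧ A ∪ B = X ∧ A ∩ B = ∅ ∧ A ≠ ∅ ∧ B ≠ ∅

/-- `S` is an `r`-split of `X`: a split of `X` whose minimum part size is `r`. -/
def IsRSplit (X : Finset α) (r : ℕ) (S : Finset (Finset α)) : Prop :=
  IsSplit X S ∧ (∃ A ∈ S, A.card = r) ∧ ∀ A ∈ S, r ≤ A.card

/-- A split system on `X`: a set of splits of `X` containing all trivial splits
`{x} | X \ {x}`, `x ∈ X`. -/
def IsSplitSystem (X : Finset α) (𝒮 : Finset (Finset (Finset α))) : Prop :=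
  (∀ S ∈ 𝒮, IsSplit X S) ∧ ∀ x ∈ X, ({{x}, X \ {x}} : Finset (Finset α)) ∈ 𝒮

/-- `phiNe Y Y' S` says `φ_Y(S) ≠ φ_{Y'}(S)`: the part of `S` containing at least two
elements of the 3-set `Y` differs from the part of `S` containing at least two
elements of the 3-set `Y'`. -/
def phiNe (Y Y' : Finset α) (S : Finset (Finset α)) : Prop :=
  ∃ t ∈ S, ∃ t' ∈ S, t ≠ t' ∧ 2 ≤ (Y ∩ t).card ∧ 2 ≤ (Y' ∩ t').card

/-- A split system on `X` is injective if for all distinct 3-subsets `Y`, `Y'` of `X`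
there is a split `S ∈ 𝒮` with `φ_Y(S) ≠ φ_{Y'}(S)`. -/
def IsInjective (X : Finset α) (𝒮 : Finset (Finset (Finset α))) : Prop :=
  ∀ Y Y' : Finset α, Y ⊆ X → Y' ⊆ X → Y.card = 3 → Y'.card = 3 → Y ≠ Y' →
    ∃ S ∈ 𝒮, phiNe Y Y' S

/-- The restriction `S|_Y` of a split to `Y`, as the set of restricted parts. -/
def restrictSplit (S : Finset (Finset α)) (Y : Finset α) : Finset (Finset α) :=
  S.image (· ∩ Y)

open scoped Classical in
/-- The restriction `𝒮|_Y` of a split system to `Y`: all splits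
`(A ∩ Y) | (B ∩ Y)` with `A|B ∈ 𝒮` and both intersections nonempty. -/
noncomputable def restrictSS (𝒮 : Finset (Finset (Finset α))) (Y : Finset α) :
    Finset (Finset (Finset α)) :=
  (𝒮.image fun S => restrictSplit S Y).filter fun T => ∀ t ∈ T, t ≠ ∅

/-- `𝒮` 4-dices `X`. -/
def FourDices (X : Finset α) (𝒮 : Finset (Finset (Finset α))) : Prop :=
  X.card < 4 ∨ ∀ Y ⊆ X, Y.card = 4 →
    ∃ 𝒯 ⊆ restrictSS 𝒮 Y, 2 ≤ 𝒯.card ∧ ∀ S ∈ 𝒯, IsRSplit Y 2 S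

/-- `𝒮` 5-dices `X`. -/
def FiveDices (X : Finset α) (𝒮 : Finset (Finset (Finset α))) : Prop :=
  X.card < 5 ∨ ∀ Y ⊆ X, Y.card = 5 →
    ∃ 𝒯 ⊆ restrictSS 𝒮 Y, 5 ≤ 𝒯.card ∧ ∀ S ∈ 𝒯, IsRSplit Y 2 S

/-- `𝒮` 6-dices `X`: every 6-subset restriction contains a 3-split or a triangle
of 2-splits. -/
def SixDices (X : Finset α) (𝒮 : Finset (Finset (Finset α))) : Prop :=
  X.card < 6 ∨ ∀ Y ⊆ X, Y.card = 6 →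
    (∃ S ∈ restrictSS 𝒮 Y, IsRSplit Y 3 S) ∨
    (∃ x ∈ Y, ∃ y ∈ Y, ∃ z ∈ Y, x ≠ y ∧ x ≠ z ∧ y ≠ z ∧
      ({{x, y}, Y \ {x, y}} : Finset (Finset α)) ∈ restrictSS 𝒮 Y ∧
      ({{x, z}, Y \ {x, z}} : Finset (Finset α)) ∈ restrictSS 𝒮 Y ∧
      ({{y, z}, Y \ {y, z}} : Finset (Finset α)) ∈ restrictSS 𝒮 Y)

/-- Two splits are incompatible if they are distinct and all four pairwise
intersections of their parts are nonempty. -/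
def Incompatible (S T : Finset (Finset α)) : Prop :=
  S ≠ T ∧ ∀ A ∈ S, ∀ B ∈ T, A ∩ B ≠ ∅

open scoped Classical in
/-- The dimension of a split system: maximum size of a pairwise incompatible subset
(which is `1` when all splits are pairwise compatible and `𝒮` is nonempty). -/
noncomputable def dimSS (𝒮 : Finset (Finset (Finset α))) : ℕ :=
  (𝒮.powerset.filter fun 𝒯 => ∀ S ∈ 𝒯, ∀ T ∈ 𝒯, S ≠ T → Incompatible S T).sup Finset.card

/-- The injective dimension `ID(n)`: minimum dimension of an injective split system
on `{1, …, n}`. -/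
noncomputable def ID (n : ℕ) : ℕ :=
  sInf {d : ℕ | ∃ 𝒮 : Finset (Finset (Finset ℕ)),
    IsSplitSystem (Finset.Icc 1 n) 𝒮 ∧ IsInjective (Finset.Icc 1 n) 𝒮 ∧ dimSS 𝒮 = d}

/-- The injective 2-split dimension `ID₂(n)`: minimum dimension of an injective split
system on `{1, …, n}` all of whose non-trivial splits have size 2. -/
noncomputable def ID2 (n : ℕ) : ℕ :=
  sInf {d : ℕ | ∃ 𝒮 : Finset (Finset (Finset ℕ)),
    IsSplitSystem (Finset.Icc 1 n) 𝒮 ∧ IsInjective (Finset.Icc 1 n) 𝒮 ∧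
    (∀ S ∈ 𝒮, IsRSplit (Finset.Icc 1 n) 1 S ∨ IsRSplit (Finset.Icc 1 n) 2 S) ∧
    dimSS 𝒮 = d}

/-- `𝒮` is rooted-injective relative to `r`. -/
def IsRootedInjective (X : Finset α) (r : α) (𝒮 : Finset (Finset (Finset α))) : Prop :=
  ∀ Z Z' : Finset α, Z ⊆ X \ {r} → Z' ⊆ X \ {r} → Z.card = 2 → Z'.card = 2 → Z ≠ Z' →
    ∃ S ∈ 𝒮, phiNe (insert r Z) (insert r Z') S

/-- The rooted-injective dimension `ID^r(n)`: minimum dimension of a split system on an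
`n`-element set that is rooted-injective relative to a given element. -/
noncomputable def IDr (n : ℕ) : ℕ :=
  sInf {d : ℕ | ∃ 𝒮 : Finset (Finset (Finset ℕ)),
    IsSplitSystem (Finset.Icc 1 n) 𝒮 ∧ IsRootedInjective (Finset.Icc 1 n) 1 𝒮 ∧
    dimSS 𝒮 = d}

/-- `𝒮` is circular: there is a labelling `x_1, …, x_n` of `X` such that every split
of `𝒮` has the form `{x_i, …, x_j} | complement`. -/
def IsCircular (X : Finset α) (𝒮 : Finset (Finset (Finset α))) : Prop :=
  ∃ f : ℕ → α, Set.InjOn f ↑(Finset.Icc 1 X.card) ∧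
    (Finset.Icc 1 X.card).image f = X ∧
    ∀ S ∈ 𝒮, ∃ i j : ℕ, 1 ≤ i ∧ i ≤ j ∧ j ≤ X.card ∧
      S = {(Finset.Icc i j).image f, X \ (Finset.Icc i j).image f}

/-- `𝒮` is maximal circular: circular and not properly contained in any circular
split system on `X`. -/
def IsMaximalCircular (X : Finset α) (𝒮 : Finset (Finset (Finset α))) : Prop :=
  IsCircular X 𝒮 ∧ ∀ 𝒮' : Finset (Finset (Finset α)),
    IsSplitSystem X 𝒮' → IsCircular X 𝒮' → 𝒮 ⊆ 𝒮' → 𝒮' = 𝒮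

/-- The degree of `x` in the graph `P(𝒮)` on vertex set `X` whose edges are the
pairs `{x, y}` with `xy | X − {x,y} ∈ 𝒮`. -/
def degP (X : Finset α) (𝒮 : Finset (Finset (Finset α))) (x : α) : ℕ :=
  ((X \ {x}).filter fun y => ({{x, y}, X \ {x, y}} : Finset (Finset α)) ∈ 𝒮).card

/-- `P(𝒮)` contains a 3-clique. -/
def HasTriangle (X : Finset α) (𝒮 : Finset (Finset (Finset α))) : Prop :=
  ∃ x ∈ X, ∃ y ∈ X, ∃ z ∈ X, x ≠ y ∧ x ≠ z ∧ y ≠ z ∧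
    ({{x, y}, X \ {x, y}} : Finset (Finset α)) ∈ 𝒮 ∧
    ({{x, z}, X \ {x, z}} : Finset (Finset α)) ∈ 𝒮 ∧
    ({{y, z}, X \ {y, z}} : Finset (Finset α)) ∈ 𝒮

/-- Conditions (B1) and (B2) for a map to be a vertex of the Buneman graph. -/
def IsBunemanVertex (𝒮 : Finset (Finset (Finset α))) (φ : {S // S ∈ 𝒮} → Finset α) : Prop :=
  (∀ S, φ S ∈ S.1) ∧ ∀ S S', S ≠ S' → (φ S ∩ φ S').Nonempty

/-- The vertex set of the Buneman graph `B(𝒮)`. -/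
abbrev BunemanVertex (𝒮 : Finset (Finset (Finset α))) : Type _ :=
  {φ : {S // S ∈ 𝒮} → Finset α // IsBunemanVertex 𝒮 φ}

/-- The Buneman graph `B(𝒮)`: two vertices are adjacent iff they differ on exactly
one split. -/
def BunemanGraph (𝒮 : Finset (Finset (Finset α))) : SimpleGraph (BunemanVertex 𝒮) where
  Adj φ ψ := ∃! S, φ.1 S ≠ ψ.1 S
  symm := by
    constructor
    rintro φ ψ ⟨S, hS, hU⟩
    exact ⟨S, hS.symm, fun T hT => hU T hT.symm⟩
  loopless := by
    constructor
    rintro φ ⟨S, hS, -⟩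
    exact hS rfl

/-- `m` is a median of `u`, `v`, `w` in the graph `G`. -/
def IsMedian {V : Type*} (G : SimpleGraph V) (u v w m : V) : Prop :=
  G.dist u m + G.dist m v = G.dist u v ∧
  G.dist v m + G.dist m w = G.dist v w ∧
  G.dist u m + G.dist m w = G.dist u w

/-!
Everything happens inside `Y = A ∪ B`, which has 4 or 5 points. On such a set a split of `X`
with `φ_A ≠ φ_B` restricts to a 2-split `u | Y \ u` whose 2-element part `u` lies in one of
`A`, `B` but not in the other, and every such 2-split lifts back; so both conditions become
statements about the family `F` of 2-element parts of 2-splits of `𝒮|_Y`.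

If `|A ∩ B| = 1`, the only pairs that fail to separate `A` and `B` are the four pairs `{a, b}`
with `a ∈ A \ B`, `b ∈ B \ A`; if `|A ∩ B| = 2`, the only 2-split that fails is
`A ∩ B | Y \ (A ∩ B)`. This gives one direction. Conversely, on a 5-set `Y` the sets
`{u ∈ F | u ⊆ A}` for the ten triples `A` are pairwise distinct subsets of `F`. Each `u ∈ F`
lies in three triples, so their sizes add up to `3|F|`; at most one of them is empty and at
most `|F|` are singletons, so `2 * 10 ≤ 3|F| + 2 + |F|` and `|F| ≥ 5`. On a 4-set, a lone
2-split `pq | rs` does not separate `Y - p` from `Y - q`.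
-/
def pairSplit (Y u : Finset α) : Finset (Finset α) := {u, Y \ u}

noncomputable def twoParts (𝒮 : Finset (Finset (Finset α))) (Y : Finset α) :
    Finset (Finset α) :=
  (Y.powersetCard 2).filter fun u => pairSplit Y u ∈ restrictSS 𝒮 Y

def Separates (u A B : Finset α) : Prop := u ⊆ A ∧ ¬u ⊆ B

def SeparatesTriples (F : Finset (Finset α)) (Y : Finset α) : Prop :=
  ∀ A ∈ Y.powersetCard 3, ∀ B ∈ Y.powersetCard 3, A ≠ B →
    ∃ u ∈ F, Separates u A B ∨ Separates u B A

section Splits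

variable {X Y u t t' : Finset α} {S : Finset (Finset α)} {𝒮 : Finset (Finset (Finset α))}

lemma mem_pairSplit {v : Finset α} : v ∈ pairSplit Y u ↔ v = u ∨ v = Y \ u := by
  simp [pairSplit]

lemma mem_twoParts :
    u ∈ twoParts 𝒮 Y ↔ u ∈ Y.powersetCard 2 ∧ pairSplit Y u ∈ restrictSS 𝒮 Y :=
  mem_filter

lemma twoParts_subset : twoParts 𝒮 Y ⊆ Y.powersetCard 2 := filter_subset _ _

lemma pairSplit_sdiff (h : u ⊆ Y) : pairSplit Y (Y \ u) = pairSplit Y u := by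
  rw [pairSplit, pairSplit, Finset.sdiff_sdiff_eq_self h, pair_comm]

lemma isRSplit_pairSplit (hu : u ∈ Y.powersetCard 2) (hY : 4 ≤ #Y) :
    IsRSplit Y 2 (pairSplit Y u) := by
  obtain ⟨huY, hu2⟩ := mem_powersetCard.1 hu
  have hc : #(Y \ u) = #Y - 2 := by rw [card_sdiff_of_subset huY, hu2]
  refine ⟨⟨u, Y \ u, rfl, union_sdiff_of_subset huY, inter_sdiff_self _ _, ?_, ?_⟩,
    ⟨u, mem_insert_self _ _, hu2⟩, fun v hv => ?_⟩
  · exact (card_pos.1 (by omega)).ne_empty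
  · exact (card_pos.1 (by omega)).ne_empty
  · rcases mem_pairSplit.1 hv with rfl | rfl <;> omega

lemma IsRSplit.exists_eq_pairSplit {r : ℕ} {T : Finset (Finset α)} (h : IsRSplit Y r T) :
    ∃ u ∈ Y.powersetCard r, T = pairSplit Y u := by
  obtain ⟨⟨P, Q, rfl, hPQ, hPQe, -, -⟩, ⟨v, hv, hvr⟩, -⟩ := h
  have hdisj : Disjoint P Q := disjoint_iff_inter_eq_empty.2 hPQe
  have hQ : Q = Y \ P := by rw [← hPQ, union_sdiff_left, sdiff_eq_self_of_disjoint hdisj.symm]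
  have hP : P = Y \ Q := by rw [← hPQ, union_sdiff_right, sdiff_eq_self_of_disjoint hdisj]
  rcases mem_insert.1 hv with rfl | hv
  · exact ⟨v, mem_powersetCard.2 ⟨hPQ ▸ subset_union_left, hvr⟩, by rw [pairSplit, hQ]⟩
  · obtain rfl := mem_singleton.1 hv
    exact ⟨v, mem_powersetCard.2 ⟨hPQ ▸ subset_union_right, hvr⟩,
      by rw [pairSplit, pair_comm, hP]⟩

lemma IsSplit.eq_pair (hS : IsSplit X S) (ht : t ∈ S) (ht' : t' ∈ S) (hne : t ≠ t') :
    S = {t, t'} ∧ t ∪ t' = X ∧ Disjoint t t' := by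
  obtain ⟨P, Q, rfl, hPQ, hPQe, -, -⟩ := hS
  rw [← disjoint_iff_inter_eq_empty] at hPQe
  simp only [mem_insert, mem_singleton] at ht ht'
  rcases ht with rfl | rfl <;> rcases ht' with rfl | rfl
  · exact absurd rfl hne
  · exact ⟨rfl, hPQ, hPQe⟩
  · exact ⟨pair_comm _ _, by rwa [union_comm], hPQe.symm⟩
  · exact absurd rfl hne

lemma IsSplit.pairSplit_mem_restrictSS (hS : IsSplit X S) (hS𝒮 : S ∈ 𝒮) (ht : t ∈ S)
    (ht' : t' ∈ S) (hne : t ≠ t') (hYX : Y ⊆ X) (hne₁ : (t ∩ Y).Nonempty)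
    (hne₂ : (t' ∩ Y).Nonempty) : pairSplit Y (t ∩ Y) ∈ restrictSS 𝒮 Y := by
  obtain ⟨rfl, hunion, hdisj⟩ := hS.eq_pair ht ht' hne
  have ht'Y : t' ∩ Y = Y \ (t ∩ Y) := by
    ext x
    have := @hYX x
    rw [← hunion] at this
    simp only [mem_inter, mem_sdiff, mem_union] at this ⊢
    have := @disjoint_left.1 hdisj x
    tauto
  have hres : restrictSplit {t, t'} Y = pairSplit Y (t ∩ Y) := by
    simp [restrictSplit, pairSplit, ht'Y]
  refine mem_filter.2 ⟨mem_image.2 ⟨_, hS𝒮, hres⟩, fun v hv => ?_⟩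
  rw [mem_pairSplit, ← ht'Y] at hv
  rcases hv with rfl | rfl
  exacts [hne₁.ne_empty, hne₂.ne_empty]

lemma exists_of_pairSplit_mem_restrictSS (h : pairSplit Y u ∈ restrictSS 𝒮 Y) :
    ∃ S ∈ 𝒮, ∃ t ∈ S, ∃ t' ∈ S, t ∩ Y = u ∧ t' ∩ Y = Y \ u := by
  obtain ⟨S, hS, hres⟩ := mem_image.1 (mem_filter.1 h).1
  obtain ⟨t, ht, htu⟩ :=
    mem_image.1 (hres ▸ mem_pairSplit.2 (Or.inl rfl) : u ∈ restrictSplit S Y)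
  obtain ⟨t', ht', ht'u⟩ :=
    mem_image.1 (hres ▸ mem_pairSplit.2 (Or.inr rfl) : Y \ u ∈ restrictSplit S Y)
  exact ⟨S, hS, t, ht, t', ht', htu, ht'u⟩

lemma subset_image_twoParts {𝒯 : Finset (Finset (Finset α))} (h𝒯 : 𝒯 ⊆ restrictSS 𝒮 Y)
    (h2 : ∀ T ∈ 𝒯, IsRSplit Y 2 T) : 𝒯 ⊆ (twoParts 𝒮 Y).image (pairSplit Y) := by
  intro T hT
  obtain ⟨u, hu, rfl⟩ := (h2 T hT).exists_eq_pairSplit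
  exact mem_image_of_mem _ (mem_twoParts.2 ⟨hu, h𝒯 hT⟩)

end Splits

section Separation

variable {X Y u t t' A B : Finset α} {S : Finset (Finset α)} {𝒮 : Finset (Finset (Finset α))}

lemma phiNe_comm : phiNe A B S ↔ phiNe B A S :=
  ⟨fun ⟨t, ht, t', ht', hne, hA, hB⟩ => ⟨t', ht', t, ht, hne.symm, hB, hA⟩,
    fun ⟨t, ht, t', ht', hne, hA, hB⟩ => ⟨t', ht', t, ht, hne.symm, hB, hA⟩⟩

lemma separates_of_two_le_card (hu : #u = 2) (hA : 2 ≤ #(A ∩ u)) (hB3 : #B = 3)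
    (hB : 2 ≤ #(B \ u)) : Separates u A B := by
  refine ⟨inter_eq_right.1 (eq_of_subset_of_card_le inter_subset_right (by omega)),
    fun huB => ?_⟩
  rw [card_sdiff_of_subset huB] at hB
  omega

lemma Separates.two_le_card_sdiff (h : Separates u A B) (hu : #u = 2) (hB3 : #B = 3) :
    2 ≤ #(B \ u) := by
  have : #(u ∩ B) < #u :=
    card_lt_card ⟨inter_subset_left, fun h' => h.2 (h'.trans inter_subset_right)⟩
  rw [card_sdiff]
  omega

lemma exists_phiNe_of_separates (hu : u ∈ twoParts 𝒮 Y) (hB : B ⊆ Y) (hB3 : #B = 3)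
    (h : Separates u A B) : ∃ S ∈ 𝒮, phiNe A B S := by
  obtain ⟨hu, hmem⟩ := mem_twoParts.1 hu
  obtain ⟨huY, hu2⟩ := mem_powersetCard.1 hu
  obtain ⟨S, hS, t, ht, t', ht', rfl, ht'Y⟩ := exists_of_pairSplit_mem_restrictSS hmem
  refine ⟨S, hS, t, ht, t', ht', ?_, ?_, ?_⟩
  · rintro rfl
    have := inter_sdiff_self (t ∩ Y) Y
    rw [← ht'Y, inter_self] at this
    simp [this] at hu2
  · exact hu2 ▸ card_le_card (subset_inter h.1 inter_subset_left)
  · refine (h.two_le_card_sdiff hu2 hB3).trans (card_le_card fun x hx => ?_)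
    obtain ⟨hxB, hxu⟩ := mem_sdiff.1 hx
    have : x ∈ t' ∩ Y := ht'Y ▸ mem_sdiff.2 ⟨hB hxB, hxu⟩
    exact mem_inter.2 ⟨hxB, (mem_inter.1 this).1⟩

lemma IsSplit.inter_mem_twoParts_separates (hS : IsSplit X S) (hS𝒮 : S ∈ 𝒮) (ht : t ∈ S)
    (ht' : t' ∈ S) (hne : t ≠ t') (hYX : Y ⊆ X) (hA : A ⊆ Y) (hB : B ⊆ Y) (hB3 : #B = 3)
    (hAt : 2 ≤ #(A ∩ t)) (hBt' : 2 ≤ #(B ∩ t')) (h2 : #(t ∩ Y) = 2) :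
    t ∩ Y ∈ twoParts 𝒮 Y ∧ Separates (t ∩ Y) A B := by
  have hdisj := (hS.eq_pair ht ht' hne).2.2
  have hAt' : A ∩ t ⊆ A ∩ (t ∩ Y) := fun x hx => by
    simp only [mem_inter] at hx ⊢; exact ⟨hx.1, hx.2, hA hx.1⟩
  have hBt : B ∩ t' ⊆ B \ (t ∩ Y) := fun x hx => by
    simp only [mem_inter, mem_sdiff] at hx ⊢
    exact ⟨hx.1, fun h => disjoint_left.1 hdisj h.1 hx.2⟩
  have hBY : B ∩ t' ⊆ t' ∩ Y := fun x hx => by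
    simp only [mem_inter] at hx ⊢; exact ⟨hx.2, hB hx.1⟩
  refine ⟨mem_twoParts.2 ⟨mem_powersetCard.2 ⟨inter_subset_right, h2⟩,
      hS.pairSplit_mem_restrictSS hS𝒮 ht ht' hne hYX (card_pos.1 (by omega))
        (card_pos.1 (by have := card_le_card hBY; omega))⟩,
    separates_of_two_le_card h2 (hAt.trans (card_le_card hAt')) hB3
      (hBt'.trans (card_le_card hBt))⟩

lemma exists_separates_of_phiNe (h𝒮 : ∀ S ∈ 𝒮, IsSplit X S) (hYX : Y ⊆ X) (hY : #Y ≤ 5)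
    (hA : A ⊆ Y) (hB : B ⊆ Y) (hA3 : #A = 3) (hB3 : #B = 3) (hS : S ∈ 𝒮) (h : phiNe A B S) :
    ∃ u ∈ twoParts 𝒮 Y, Separates u A B ∨ Separates u B A := by
  obtain ⟨t, ht, t', ht', hne, hAt, hBt'⟩ := h
  have hdisj := ((h𝒮 S hS).eq_pair ht ht' hne).2.2
  have ht2 : 2 ≤ #(t ∩ Y) := hAt.trans <| card_le_card fun x hx => by
    simp only [mem_inter] at hx ⊢; exact ⟨hx.2, hA hx.1⟩
  have ht'2 : 2 ≤ #(t' ∩ Y) := hBt'.trans <| card_le_card fun x hx => by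
    simp only [mem_inter] at hx ⊢; exact ⟨hx.2, hB hx.1⟩
  have hsum : #(t ∩ Y) + #(t' ∩ Y) ≤ #Y := by
    rw [← card_union_of_disjoint (disjoint_of_subset_left inter_subset_left
      (disjoint_of_subset_right inter_subset_left hdisj))]
    exact card_le_card (union_subset inter_subset_right inter_subset_right)
  rcases (by omega : #(t ∩ Y) = 2 ∨ #(t' ∩ Y) = 2) with h2 | h2
  · obtain ⟨hu, hsep⟩ :=
      (h𝒮 S hS).inter_mem_twoParts_separates hS ht ht' hne hYX hA hB hB3 hAt hBt' h2
    exact ⟨_, hu, Or.inl hsep⟩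
  · obtain ⟨hu, hsep⟩ :=
      (h𝒮 S hS).inter_mem_twoParts_separates hS ht' ht hne.symm hYX hB hA hA3 hBt' hAt h2
    exact ⟨_, hu, Or.inr hsep⟩

lemma exists_phiNe_iff_exists_separates (h𝒮 : ∀ S ∈ 𝒮, IsSplit X S) (hYX : Y ⊆ X)
    (hY : #Y ≤ 5) (hA : A ⊆ Y) (hB : B ⊆ Y) (hA3 : #A = 3) (hB3 : #B = 3) :
    (∃ S ∈ 𝒮, phiNe A B S) ↔ ∃ u ∈ twoParts 𝒮 Y, Separates u A B ∨ Separates u B A := by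
  refine ⟨fun ⟨S, hS, h⟩ => exists_separates_of_phiNe h𝒮 hYX hY hA hB hA3 hB3 hS h, ?_⟩
  rintro ⟨u, hu, h | h⟩
  · exact exists_phiNe_of_separates hu hB hB3 h
  · obtain ⟨S, hS, h'⟩ := exists_phiNe_of_separates hu hA hA3 h
    exact ⟨S, hS, phiNe_comm.1 h'⟩

end Separation

section Triples

variable {Y u A B : Finset α} {F : Finset (Finset α)}

lemma card_inter_lt_of_ne (hAB : #A = #B) (hne : A ≠ B) : #(A ∩ B) < #A := by
  refine (card_le_card inter_subset_left).lt_of_ne fun h => hne ?_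
  have hA := eq_of_subset_of_card_le inter_subset_left h.ge
  have hB := eq_of_subset_of_card_le inter_subset_right (hAB ▸ h).ge
  rw [← hA, hB]

lemma two_mul_card_le_sum_card_add_card {s : Finset α} {𝒢 : Finset (Finset α)}
    (h𝒢 : 𝒢 ⊆ s.powerset) : 2 * #𝒢 ≤ ∑ G ∈ 𝒢, #G + 2 + #s := by
  have hsub : ∀ k, 𝒢.filter (#· = k) ⊆ s.powersetCard k := fun k G hG => by
    rw [mem_filter] at hG
    exact mem_powersetCard.2 ⟨mem_powerset.1 (h𝒢 hG.1), hG.2⟩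
  have h0 : #(𝒢.filter (#· = 0)) ≤ 1 := by simpa using card_le_card (hsub 0)
  have h1 : #(𝒢.filter (#· = 1)) ≤ #s := by simpa using card_le_card (hsub 1)
  calc 2 * #𝒢 = ∑ G ∈ 𝒢, 2 := by rw [sum_const, smul_eq_mul, mul_comm]
    _ ≤ ∑ G ∈ 𝒢, (#G + 2 * (if #G = 0 then 1 else 0) + if #G = 1 then 1 else 0) :=
      sum_le_sum fun G _ => by split_ifs <;> omega
    _ = ∑ G ∈ 𝒢, #G + 2 * #(𝒢.filter (#· = 0)) + #(𝒢.filter (#· = 1)) := by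
      rw [sum_add_distrib, sum_add_distrib, ← mul_sum, sum_boole, sum_boole]
      simp
    _ ≤ _ := by omega

lemma five_le_card_of_separatesTriples (hY : #Y = 5) (hF : F ⊆ Y.powersetCard 2)
    (h : SeparatesTriples F Y) : 5 ≤ #F := by
  set T := Y.powersetCard 3
  have hinj : Set.InjOn (fun A => F.filter (· ⊆ A)) T := by
    intro A hA B hB hAB
    by_contra hne
    obtain ⟨u, hu, ⟨huA, huB⟩ | ⟨huB, huA⟩⟩ := h A hA B hB hne
    all_goals
      have hiff := Finset.ext_iff.1 hAB u
      simp only [mem_filter, hu, true_and] at hiff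
    exacts [huB (hiff.1 huA), huA (hiff.2 huB)]
  have hsum : ∑ A ∈ T, #(F.filter (· ⊆ A)) = 3 * #F := by
    have := sum_card_bipartiteAbove_eq_sum_card_bipartiteBelow (s := T) (t := F)
      (r := fun A u => u ⊆ A)
    simp only [bipartiteAbove, bipartiteBelow] at this
    rw [this, mul_comm, ← smul_eq_mul, ← sum_const]
    refine sum_congr rfl fun u hu => ?_
    obtain ⟨huY, hu2⟩ := mem_powersetCard.1 (hF hu)
    rw [card_filter_powersetCard_subset u Y 3 huY (by omega), hY, hu2]
    rfl
  have := two_mul_card_le_sum_card_add_card (𝒢 := T.image fun A => F.filter (· ⊆ A))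
    (image_subset_iff.2 fun A _ => mem_powerset.2 (filter_subset _ _))
  rw [card_image_of_injOn hinj, sum_image hinj, hsum, card_powersetCard, hY,
    show Nat.choose 5 3 = 10 from rfl] at this
  omega

lemma exists_ne_ne_sdiff_of_separatesTriples (hY : #Y = 4) (hF : F ⊆ Y.powersetCard 2)
    (h : SeparatesTriples F Y) : ∃ u ∈ F, ∃ v ∈ F, v ≠ u ∧ v ≠ Y \ u := by
  by_contra! hF1
  obtain ⟨u, hu, hFu⟩ : ∃ u ∈ Y.powersetCard 2, ∀ v ∈ F, v = u ∨ v = Y \ u := by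
    rcases F.eq_empty_or_nonempty with rfl | ⟨u, hu⟩
    · obtain ⟨u, huY, hu2⟩ := exists_subset_card_eq (show 2 ≤ #Y by omega)
      exact ⟨u, mem_powersetCard.2 ⟨huY, hu2⟩, by simp⟩
    · exact ⟨u, hF hu, fun v hv => or_iff_not_imp_left.2 (hF1 u hu v hv)⟩
  obtain ⟨huY, hu2⟩ := mem_powersetCard.1 hu
  obtain ⟨p, q, hpq, rfl⟩ := card_eq_two.1 hu2
  have hp : p ∈ Y := huY (mem_insert_self _ _)
  have hq : q ∈ Y := huY (mem_insert_of_mem (mem_singleton_self _))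
  have herase : ∀ x ∈ Y, Y.erase x ∈ Y.powersetCard 3 := fun x hx =>
    mem_powersetCard.2 ⟨erase_subset _ _, by rw [card_erase_of_mem hx, hY]⟩
  have hne : Y.erase q ≠ Y.erase p := fun heq =>
    (notMem_erase p Y) (heq ▸ mem_erase.2 ⟨hpq, hp⟩)
  obtain ⟨v, hv, hsep⟩ := h _ (herase q hq) _ (herase p hp) hne
  rcases hFu v hv with rfl | rfl
  · simp [Separates, subset_iff] at hsep
  · have hsub : ∀ x ∈ ({p, q} : Finset α), Y \ {p, q} ⊆ Y.erase x := fun x hx => by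
      rw [erase_eq]
      exact sdiff_subset_sdiff subset_rfl (singleton_subset_iff.2 hx)
    rcases hsep with ⟨-, hsep⟩ | ⟨-, hsep⟩
    exacts [hsep (hsub p (by simp)), hsep (hsub q (by simp))]

lemma subset_inter_or_eq_pair_of_not_separates (hu : #u = 2) (huAB : u ⊆ A ∪ B)
    (h : ¬(Separates u A B ∨ Separates u B A)) :
    u ⊆ A ∩ B ∨ ∃ x ∈ A \ B, ∃ y ∈ B \ A, u = {x, y} := by
  simp only [Separates, not_or, not_and, not_not] at h
  by_cases huA : u ⊆ A
  · exact Or.inl (subset_inter huA (h.1 huA))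
  by_cases huB : u ⊆ B
  · exact absurd (h.2 huB) huA
  obtain ⟨x, hxu, hxB⟩ := not_subset.1 huB
  obtain ⟨y, hyu, hyA⟩ := not_subset.1 huA
  have hxA : x ∈ A := (mem_union.1 (huAB hxu)).resolve_right hxB
  have hyB : y ∈ B := (mem_union.1 (huAB hyu)).resolve_left hyA
  refine Or.inr ⟨x, mem_sdiff.2 ⟨hxA, hxB⟩, y, mem_sdiff.2 ⟨hyB, hyA⟩, ?_⟩
  refine (eq_of_subset_of_card_le
    (insert_subset_iff.2 ⟨hxu, singleton_subset_iff.2 hyu⟩) ?_).symm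
  rw [hu, card_pair (by rintro rfl; exact hyA hxA)]

lemma card_le_four_of_not_separates (hA3 : #A = 3) (hB3 : #B = 3) (hAB : #(A ∩ B) = 1)
    (hF : F ⊆ (A ∪ B).powersetCard 2)
    (h : ∀ u ∈ F, ¬(Separates u A B ∨ Separates u B A)) : #F ≤ 4 := by
  have hsub : F ⊆ ((A \ B) ×ˢ (B \ A)).image fun p => {p.1, p.2} := fun u hu => by
    obtain ⟨huAB, hu2⟩ := mem_powersetCard.1 (hF hu)
    rcases subset_inter_or_eq_pair_of_not_separates hu2 huAB (h u hu) with
      hsub | ⟨x, hx, y, hy, rfl⟩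
    · have := card_le_card hsub
      omega
    · exact mem_image.2 ⟨(x, y), mem_product.2 ⟨hx, hy⟩, rfl⟩
  have hBA : #(B ∩ A) = 1 := by rwa [inter_comm]
  calc #F ≤ #((A \ B) ×ˢ (B \ A)) := (card_le_card hsub).trans card_image_le
    _ = 4 := by rw [card_product, card_sdiff, card_sdiff, hAB, hBA, hA3, hB3]

lemma subset_pair_of_not_separates (hA3 : #A = 3) (hB3 : #B = 3) (hAB : #(A ∩ B) = 2)
    (hF : F ⊆ (A ∪ B).powersetCard 2)
    (h : ∀ u ∈ F, ¬(Separates u A B ∨ Separates u B A)) :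
    F ⊆ {A ∩ B, (A ∪ B) \ (A ∩ B)} := fun u hu => by
  obtain ⟨huAB, hu2⟩ := mem_powersetCard.1 (hF hu)
  rw [mem_insert, mem_singleton]
  rcases subset_inter_or_eq_pair_of_not_separates hu2 huAB (h u hu) with
    hsub | ⟨x, hx, y, hy, rfl⟩
  · exact Or.inl (eq_of_subset_of_card_le hsub (by omega))
  · refine Or.inr (eq_of_subset_of_card_le ?_ ?_)
    · simp only [mem_sdiff] at hx hy
      simp only [insert_subset_iff, singleton_subset_iff, mem_sdiff, mem_union, mem_inter]
      tauto
    · have := card_union_add_card_inter A B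
      rw [card_sdiff_of_subset inter_subset_union]
      omega

end Triples

section Dicing

variable {X Y A B : Finset α} {𝒮 : Finset (Finset (Finset α))}

lemma exists_separates_of_five_twoSplits
    (h : ∃ 𝒯 ⊆ restrictSS 𝒮 (A ∪ B), 5 ≤ #𝒯 ∧ ∀ T ∈ 𝒯, IsRSplit (A ∪ B) 2 T)
    (hA3 : #A = 3) (hB3 : #B = 3) (hAB : #(A ∩ B) = 1) :
    ∃ u ∈ twoParts 𝒮 (A ∪ B), Separates u A B ∨ Separates u B A := by
  obtain ⟨𝒯, h𝒯, h5, h2⟩ := h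
  by_contra hns
  have := (card_le_card (subset_image_twoParts h𝒯 h2)).trans card_image_le
  have := card_le_four_of_not_separates hA3 hB3 hAB twoParts_subset
    fun u hu hs => hns ⟨u, hu, hs⟩
  omega

lemma exists_separates_of_two_twoSplits
    (h : ∃ 𝒯 ⊆ restrictSS 𝒮 (A ∪ B), 2 ≤ #𝒯 ∧ ∀ T ∈ 𝒯, IsRSplit (A ∪ B) 2 T)
    (hA3 : #A = 3) (hB3 : #B = 3) (hAB : #(A ∩ B) = 2) :
    ∃ u ∈ twoParts 𝒮 (A ∪ B), Separates u A B ∨ Separates u B A := by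
  obtain ⟨𝒯, h𝒯, h2, h2s⟩ := h
  by_contra hns
  have hsub := subset_pair_of_not_separates hA3 hB3 hAB twoParts_subset
    fun u hu hs => hns ⟨u, hu, hs⟩
  have hone : (twoParts 𝒮 (A ∪ B)).image (pairSplit (A ∪ B)) ⊆
      {pairSplit (A ∪ B) (A ∩ B)} := by
    refine image_subset_iff.2 fun u hu => ?_
    rcases mem_insert.1 (hsub hu) with rfl | hu
    · exact mem_singleton_self _
    · rw [mem_singleton.1 hu, pairSplit_sdiff inter_subset_union]
      exact mem_singleton_self _
  have := card_le_card ((subset_image_twoParts h𝒯 h2s).trans hone)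
  rw [card_singleton] at this
  omega

lemma exists_five_twoSplits (hY : #Y = 5) (h : SeparatesTriples (twoParts 𝒮 Y) Y) :
    ∃ 𝒯 ⊆ restrictSS 𝒮 Y, 5 ≤ #𝒯 ∧ ∀ T ∈ 𝒯, IsRSplit Y 2 T := by
  have hinj : Set.InjOn (pairSplit Y) (twoParts 𝒮 Y) := by
    intro u hu v hv huv
    obtain ⟨hvY, hv2⟩ := mem_powersetCard.1 (mem_twoParts.1 hv).1
    rcases mem_pairSplit.1 (huv ▸ mem_pairSplit.2 (Or.inl rfl) : u ∈ pairSplit Y v) with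
      h | h
    · exact h
    · have := card_sdiff_of_subset hvY
      rw [← h, (mem_powersetCard.1 (mem_twoParts.1 hu).1).2] at this
      omega
  refine ⟨(twoParts 𝒮 Y).image (pairSplit Y),
    image_subset_iff.2 fun u hu => (mem_twoParts.1 hu).2, ?_, ?_⟩
  · rw [card_image_of_injOn hinj]
    exact five_le_card_of_separatesTriples hY twoParts_subset h
  · simp only [forall_mem_image]
    exact fun u hu => isRSplit_pairSplit (mem_twoParts.1 hu).1 (by omega)

lemma exists_two_twoSplits (hY : #Y = 4) (h : SeparatesTriples (twoParts 𝒮 Y) Y) :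
    ∃ 𝒯 ⊆ restrictSS 𝒮 Y, 2 ≤ #𝒯 ∧ ∀ T ∈ 𝒯, IsRSplit Y 2 T := by
  obtain ⟨u, hu, v, hv, hvu, hvu'⟩ :=
    exists_ne_ne_sdiff_of_separatesTriples hY twoParts_subset h
  have hne : pairSplit Y u ≠ pairSplit Y v := fun heq =>
    (mem_pairSplit.1 (heq ▸ mem_pairSplit.2 (Or.inl rfl) : v ∈ pairSplit Y u)).elim hvu hvu'
  refine ⟨{pairSplit Y u, pairSplit Y v},
    insert_subset_iff.2 ⟨(mem_twoParts.1 hu).2, singleton_subset_iff.2 (mem_twoParts.1 hv).2⟩,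
    (card_pair hne).ge, ?_⟩
  simp only [mem_insert, mem_singleton]
  rintro T (rfl | rfl)
  exacts [isRSplit_pairSplit (mem_twoParts.1 hu).1 hY.ge,
    isRSplit_pairSplit (mem_twoParts.1 hv).1 hY.ge]

lemma separatesTriples_twoParts (h𝒮 : ∀ S ∈ 𝒮, IsSplit X S)
    (hinj : ∀ A B : Finset α, A ⊆ X → B ⊆ X → A.card = 3 → B.card = 3 → A ≠ B →
      (A ∩ B).Nonempty → ∃ S ∈ 𝒮, phiNe A B S)
    (hYX : Y ⊆ X) (hY : #Y ≤ 5) : SeparatesTriples (twoParts 𝒮 Y) Y := by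
  intro A hA B hB hne
  rw [mem_powersetCard] at hA hB
  rw [← exists_phiNe_iff_exists_separates h𝒮 hYX hY hA.1 hB.1 hA.2 hB.2]
  refine hinj A B (hA.1.trans hYX) (hB.1.trans hYX) hA.2 hB.2 hne (card_pos.1 ?_)
  have := card_union_add_card_inter A B
  have := card_le_card (union_subset hA.1 hB.1)
  omega

end Dicing

/-- For a split system `𝒮` on `X` (`|X| ≥ 5`): `𝒮` both 4-dices and
5-dices `X` iff for all distinct 3-subsets `A, B` of `X` with `A ∩ B ≠ ∅` we have
`φ_A ≠ φ_B`. -/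
theorem statement11 (X : Finset α) (hX : 5 ≤ X.card)
    (𝒮 : Finset (Finset (Finset α))) (h𝒮 : IsSplitSystem X 𝒮) :
    (FourDices X 𝒮 ∧ FiveDices X 𝒮) ↔
      ∀ A B : Finset α, A ⊆ X → B ⊆ X → A.card = 3 → B.card = 3 → A ≠ B →
        (A ∩ B).Nonempty → ∃ S ∈ 𝒮, phiNe A B S := by
  constructor
  · rintro ⟨h4, h5⟩ A B hAX hBX hA3 hB3 hne hAB
    have hYX : A ∪ B ⊆ X := union_subset hAX hBX
    have hcard := card_union_add_card_inter A B
    have hlt := card_inter_lt_of_ne (hA3.trans hB3.symm) hne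
    have hpos := card_pos.2 hAB
    rw [exists_phiNe_iff_exists_separates h𝒮.1 hYX (by omega) subset_union_left
      subset_union_right hA3 hB3]
    rcases (by omega : #(A ∩ B) = 1 ∨ #(A ∩ B) = 2) with h1 | h2
    · exact exists_separates_of_five_twoSplits
        (h5.resolve_left (by omega) _ hYX (by omega)) hA3 hB3 h1
    · exact exists_separates_of_two_twoSplits
        (h4.resolve_left (by omega) _ hYX (by omega)) hA3 hB3 h2
  · intro hinj
    exact ⟨Or.inr fun Y hYX hY => exists_two_twoSplits hY
        (separatesTriples_twoParts h𝒮.1 hinj hYX (by omega)),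
      Or.inr fun Y hYX hY => exists_five_twoSplits hY
        (separatesTriples_twoParts h𝒮.1 hinj hYX (by omega))⟩

end InjectiveSplitSystems
end

section
/- Let 𝒮 be a split system on a finite set X with |X| ≥ 3. Then 𝒮 is injective if and only if 𝒮 4-dices, 5-dices and 6-dices X. -/
namespace InjectiveSplitSystems

open Finset

variable {α : Type*} [DecidableEq α]

/-!
Whether a split separates two 3-sets `Y ≠ Y'` depends only on its restriction to
`Z = Y ∪ Y'`, which has 4, 5 or 6 points. When every split of `𝒮|_Z` has a part of size at most
two (automatic if `|Z| ≤ 5`), only the 2-splits `p | Z - p` of `𝒮|_Z` can separate, and such a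
split separates `Y` from `Y'` exactly when the pair `p` lies in one of them but not in the other.
Injectivity on `Z` thus says that the graph of these pairs has a different set of edges inside
each triple of `Z`. For `|Z| = 4` this forces two distinct 2-splits; for `|Z| = 5`, double
counting the incidences between edges and triples forces five edges; and for `|Z| = 6` without a
3-split it forces a triangle, because a triangle-free graph on six vertices has two triples
without edges. Conversely, each dicing condition yields a separating split for the pairs
`Y, Y'` with `|Y ∪ Y'| = 4, 5, 6` respectively.
-/

section Separation

variable {X Y Y' Z A B : Finset α} {S T : Finset (Finset α)} {𝒮 : Finset (Finset (Finset α))}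

lemma IsSplit.exists_eq_pair_sdiff (h : IsSplit X S) : ∃ A, S = {A, X \ A} := by
  obtain ⟨A, B, rfl, hAB, hdis, -, -⟩ := h
  exact ⟨A, by rw [← hAB, union_sdiff_cancel_left (disjoint_iff_inter_eq_empty.mpr hdis)]⟩

/-- `φ_Y ≠ φ_{Y'}` for the bipartition `B | Z - B`, whatever the ground set `Z ⊇ Y ∪ Y'` is
(see `phiNe_pair_sdiff_iff`). -/
def SeparatesBy (Y Y' B : Finset α) : Prop :=
  (2 ≤ #(Y ∩ B) ∧ 2 ≤ #(Y' \ B)) ∨ (2 ≤ #(Y \ B) ∧ 2 ≤ #(Y' ∩ B))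

lemma inter_sdiff_of_subset (hY : Y ⊆ Z) : Y ∩ (Z \ B) = Y \ B := by
  rw [← inter_sdiff_assoc, inter_eq_left.2 hY]

lemma phiNe_pair_sdiff_iff (hY : Y ⊆ Z) (hY' : Y' ⊆ Z) :
    phiNe Y Y' {B, Z \ B} ↔ SeparatesBy Y Y' B := by
  have hne : ∀ W : Finset α, 2 ≤ #(W ∩ B) → B ≠ Z \ B := fun W h e => by
    obtain ⟨y, hy⟩ := card_pos.mp (by omega : 0 < #(W ∩ B))
    have hyB := (mem_inter.mp hy).2
    exact (mem_sdiff.mp (e ▸ hyB)).2 hyB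
  simp only [phiNe, mem_insert, mem_singleton, exists_eq_or_imp, exists_eq_left, ne_eq,
    not_true_eq_false, false_and, or_false, false_or, inter_sdiff_of_subset hY,
    inter_sdiff_of_subset hY', SeparatesBy]
  constructor
  · rintro (⟨-, h⟩ | ⟨-, h⟩)
    exacts [Or.inl h, Or.inr h]
  · rintro (h | h)
    exacts [Or.inl ⟨hne Y h.1, h⟩, Or.inr ⟨fun e => hne Y' h.2 e.symm, h⟩]

lemma SeparatesBy.nonempty (h : SeparatesBy Y Y' B) (hY : Y ⊆ Z) (hY' : Y' ⊆ Z) :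
    B.Nonempty ∧ (Z \ B).Nonempty := by
  rcases h with ⟨h1, h2⟩ | ⟨h1, h2⟩
  · exact ⟨(card_pos.mp (by omega : 0 < #(Y ∩ B))).mono inter_subset_right,
      (card_pos.mp (by omega : 0 < #(Y' \ B))).mono (sdiff_subset_sdiff hY' le_rfl)⟩
  · exact ⟨(card_pos.mp (by omega : 0 < #(Y' ∩ B))).mono inter_subset_right,
      (card_pos.mp (by omega : 0 < #(Y \ B))).mono (sdiff_subset_sdiff hY le_rfl)⟩

lemma separatesBy_inter_iff (hY : Y ⊆ Z) (hY' : Y' ⊆ Z) :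
    SeparatesBy Y Y' (A ∩ Z) ↔ SeparatesBy Y Y' A := by
  have hi : ∀ W ⊆ Z, W ∩ (A ∩ Z) = W ∩ A := fun W hW => by
    ext x; have := @hW x; simp only [mem_inter]; tauto
  have hd : ∀ W ⊆ Z, W \ (A ∩ Z) = W \ A := fun W hW => by
    ext x; have := @hW x; simp only [mem_sdiff, mem_inter]; tauto
  simp only [SeparatesBy, hi Y hY, hi Y' hY', hd Y hY, hd Y' hY']

lemma mem_restrictSS_iff (h𝒮 : ∀ S ∈ 𝒮, IsSplit X S) (hZX : Z ⊆ X) :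
    T ∈ restrictSS 𝒮 Z ↔ ∃ A, {A, X \ A} ∈ 𝒮 ∧ (A ∩ Z).Nonempty ∧ (Z \ (A ∩ Z)).Nonempty ∧
      T = {A ∩ Z, Z \ (A ∩ Z)} := by
  have hres : ∀ A, restrictSplit {A, X \ A} Z = {A ∩ Z, Z \ (A ∩ Z)} := fun A => by
    have : (X \ A) ∩ Z = Z \ (A ∩ Z) := by
      ext x; have := @hZX x; simp only [mem_inter, mem_sdiff]; tauto
    rw [restrictSplit, image_insert, image_singleton, this]
  simp only [restrictSS, mem_filter, mem_image]
  constructor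
  · rintro ⟨⟨S, hS, rfl⟩, hne⟩
    obtain ⟨A, rfl⟩ := (h𝒮 S hS).exists_eq_pair_sdiff
    rw [hres] at hne ⊢
    exact ⟨A, hS, nonempty_iff_ne_empty.mpr (hne _ (mem_insert_self _ _)),
      nonempty_iff_ne_empty.mpr (hne _ (mem_insert_of_mem (mem_singleton_self _))), rfl⟩
  · rintro ⟨A, hS, h1, h2, rfl⟩
    refine ⟨⟨_, hS, hres A⟩, ?_⟩
    simp only [mem_insert, mem_singleton]
    rintro t (rfl | rfl)
    exacts [h1.ne_empty, h2.ne_empty]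

lemma exists_mem_restrictSS_phiNe_iff (h𝒮 : ∀ S ∈ 𝒮, IsSplit X S) (hZX : Z ⊆ X)
    (hY : Y ⊆ Z) (hY' : Y' ⊆ Z) :
    (∃ T ∈ restrictSS 𝒮 Z, phiNe Y Y' T) ↔ ∃ S ∈ 𝒮, phiNe Y Y' S := by
  have hS (A) : phiNe Y Y' {A, X \ A} ↔ SeparatesBy Y Y' A :=
    phiNe_pair_sdiff_iff (hY.trans hZX) (hY'.trans hZX)
  have hT (A) : phiNe Y Y' {A ∩ Z, Z \ (A ∩ Z)} ↔ SeparatesBy Y Y' A :=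
    (phiNe_pair_sdiff_iff hY hY').trans (separatesBy_inter_iff hY hY')
  constructor
  · rintro ⟨T, hTm, hphi⟩
    obtain ⟨A, hA, -, -, rfl⟩ := (mem_restrictSS_iff h𝒮 hZX).1 hTm
    exact ⟨_, hA, (hS A).2 ((hT A).1 hphi)⟩
  · rintro ⟨S, hSm, hphi⟩
    obtain ⟨A, rfl⟩ := (h𝒮 S hSm).exists_eq_pair_sdiff
    have hsep := (hS A).1 hphi
    obtain ⟨h1, h2⟩ := ((separatesBy_inter_iff hY hY').2 hsep).nonempty hY hY'
    exact ⟨_, (mem_restrictSS_iff h𝒮 hZX).2 ⟨A, hSm, h1, h2, rfl⟩, (hT A).2 hsep⟩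

end Separation

/-- The graph `P(𝒮|_Z)` (see `degP`), as its set of edges. -/
noncomputable def pairGraph (𝒮 : Finset (Finset (Finset α))) (Z : Finset α) : Finset (Finset α) :=
  (Z.powersetCard 2).filter fun p => {p, Z \ p} ∈ restrictSS 𝒮 Z

def edgesIn (E : Finset (Finset α)) (Y : Finset α) : Finset (Finset α) :=
  E.filter (· ⊆ Y)

section PairGraph

variable {X Y Y' Z B p : Finset α} {T : Finset (Finset α)} {E : Finset (Finset α)}
  {𝒮 : Finset (Finset (Finset α))}

lemma mem_pairGraph : p ∈ pairGraph 𝒮 Z ↔ (p ⊆ Z ∧ #p = 2) ∧ {p, Z \ p} ∈ restrictSS 𝒮 Z := by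
  rw [pairGraph, mem_filter, mem_powersetCard]

lemma mem_edgesIn : p ∈ edgesIn E Y ↔ p ∈ E ∧ p ⊆ Y := mem_filter

lemma edgesIn_ne_of_mem (hp : p ∈ E) (hY : p ⊆ Y) (hY' : ¬p ⊆ Y') : edgesIn E Y ≠ edgesIn E Y' :=
  fun h => hY' (mem_edgesIn.1 (h ▸ mem_edgesIn.2 ⟨hp, hY⟩)).2

lemma subset_iff_two_le_card_inter (hp : #p = 2) : p ⊆ Y ↔ 2 ≤ #(Y ∩ p) :=
  ⟨fun h => by rw [inter_eq_right.2 h, hp],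
    fun h => inter_eq_right.1 (eq_of_subset_of_card_le inter_subset_right (by omega))⟩

lemma separatesBy_iff_of_card_eq_two (hp : #p = 2) (hY : #Y = 3) (hY' : #Y' = 3) :
    SeparatesBy Y Y' p ↔ ¬(p ⊆ Y ↔ p ⊆ Y') := by
  have := card_inter_add_card_sdiff Y p
  have := card_inter_add_card_sdiff Y' p
  have : #(Y ∩ p) ≤ 2 := hp ▸ card_le_card inter_subset_right
  have : #(Y' ∩ p) ≤ 2 := hp ▸ card_le_card inter_subset_right
  rw [subset_iff_two_le_card_inter hp, subset_iff_two_le_card_inter hp, SeparatesBy]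
  omega

lemma isRSplit_pair_sdiff (hB : B ⊆ Z) {r : ℕ} (hr : 0 < r) (hBr : #B = r)
    (hr' : r ≤ #(Z \ B)) : IsRSplit Z r {B, Z \ B} := by
  refine ⟨⟨B, Z \ B, rfl, union_sdiff_of_subset hB, inter_sdiff_self B Z, ?_, ?_⟩,
    ⟨B, mem_insert_self _ _, hBr⟩, ?_⟩
  · exact nonempty_iff_ne_empty.1 (card_pos.1 (by omega))
  · exact nonempty_iff_ne_empty.1 (card_pos.1 (by omega))
  · simp only [mem_insert, mem_singleton]
    rintro A (rfl | rfl) <;> omega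

lemma eq_pair_sdiff_of_mem_restrictSS (h𝒮 : ∀ S ∈ 𝒮, IsSplit X S) (hZX : Z ⊆ X)
    (hT : T ∈ restrictSS 𝒮 Z) (hB : B ∈ T) : B ⊆ Z ∧ T = {B, Z \ B} := by
  obtain ⟨A, -, -, -, rfl⟩ := (mem_restrictSS_iff h𝒮 hZX).1 hT
  rcases mem_insert.1 hB with rfl | hB
  · exact ⟨inter_subset_right, rfl⟩
  · rw [mem_singleton.1 hB, Finset.sdiff_sdiff_eq_self inter_subset_right, pair_comm]
    exact ⟨sdiff_subset, rfl⟩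

lemma mem_pairGraph_of_mem_restrictSS (h𝒮 : ∀ S ∈ 𝒮, IsSplit X S) (hZX : Z ⊆ X)
    (hT : T ∈ restrictSS 𝒮 Z) (hB : B ∈ T) (hB2 : #B = 2) : B ∈ pairGraph 𝒮 Z := by
  obtain ⟨hBZ, rfl⟩ := eq_pair_sdiff_of_mem_restrictSS h𝒮 hZX hT hB
  exact mem_pairGraph.2 ⟨⟨hBZ, hB2⟩, hT⟩

lemma exists_card_le_two_of_card_le_five (h𝒮 : ∀ S ∈ 𝒮, IsSplit X S) (hZX : Z ⊆ X)
    (hZ : #Z ≤ 5) (hT : T ∈ restrictSS 𝒮 Z) : ∃ B ∈ T, #B ≤ 2 := by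
  obtain ⟨A, -, -, -, rfl⟩ := (mem_restrictSS_iff h𝒮 hZX).1 hT
  have := card_sdiff_add_card_eq_card (inter_subset_right : A ∩ Z ⊆ Z)
  by_cases h : #(A ∩ Z) ≤ 2
  · exact ⟨_, mem_insert_self _ _, h⟩
  · exact ⟨_, mem_insert_of_mem (mem_singleton_self _), by omega⟩

lemma exists_card_le_two_of_not_isRSplit_three (h𝒮 : ∀ S ∈ 𝒮, IsSplit X S) (hZX : Z ⊆ X)
    (hZ : #Z = 6) (hT : T ∈ restrictSS 𝒮 Z) (h3 : ¬IsRSplit Z 3 T) : ∃ B ∈ T, #B ≤ 2 := by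
  obtain ⟨A, -, -, -, rfl⟩ := (mem_restrictSS_iff h𝒮 hZX).1 hT
  have := card_sdiff_add_card_eq_card (inter_subset_right : A ∩ Z ⊆ Z)
  by_cases h : #(A ∩ Z) ≤ 2
  · exact ⟨_, mem_insert_self _ _, h⟩
  by_cases h' : #(Z \ (A ∩ Z)) ≤ 2
  · exact ⟨_, mem_insert_of_mem (mem_singleton_self _), h'⟩
  exact absurd (isRSplit_pair_sdiff inter_subset_right (by norm_num) (by omega) (by omega)) h3

lemma edgesIn_pairGraph_ne_of_phiNe (h𝒮 : ∀ S ∈ 𝒮, IsSplit X S) (hZX : Z ⊆ X)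
    (hsmall : ∀ T ∈ restrictSS 𝒮 Z, ∃ B ∈ T, #B ≤ 2)
    (hY : Y ∈ Z.powersetCard 3) (hY' : Y' ∈ Z.powersetCard 3) (hphi : ∃ S ∈ 𝒮, phiNe Y Y' S) :
    edgesIn (pairGraph 𝒮 Z) Y ≠ edgesIn (pairGraph 𝒮 Z) Y' := by
  rw [mem_powersetCard] at hY hY'
  obtain ⟨T, hT, hphiT⟩ := (exists_mem_restrictSS_phiNe_iff h𝒮 hZX hY.1 hY'.1).2 hphi
  obtain ⟨B, hB, hB2⟩ := hsmall T hT
  obtain ⟨-, rfl⟩ := eq_pair_sdiff_of_mem_restrictSS h𝒮 hZX hT hB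
  have hsep := (phiNe_pair_sdiff_iff hY.1 hY'.1).1 hphiT
  have hB2' : #B = 2 := by
    have := card_le_card (inter_subset_right : Y ∩ B ⊆ B)
    have := card_le_card (inter_subset_right : Y' ∩ B ⊆ B)
    rcases hsep with ⟨h, -⟩ | ⟨-, h⟩ <;> omega
  have hBE := mem_pairGraph_of_mem_restrictSS h𝒮 hZX hT (mem_insert_self _ _) hB2'
  have hxor := (separatesBy_iff_of_card_eq_two hB2' hY.2 hY'.2).1 hsep
  by_cases hBY : B ⊆ Y
  · exact edgesIn_ne_of_mem hBE hBY (by tauto)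
  · exact (edgesIn_ne_of_mem hBE (by tauto) hBY).symm

lemma injOn_edgesIn_pairGraph (h𝒮 : ∀ S ∈ 𝒮, IsSplit X S) (hinj : IsInjective X 𝒮)
    (hZX : Z ⊆ X) (hsmall : ∀ T ∈ restrictSS 𝒮 Z, ∃ B ∈ T, #B ≤ 2) :
    Set.InjOn (edgesIn (pairGraph 𝒮 Z)) (Z.powersetCard 3) := by
  intro Y hY Y' hY' heq
  by_contra hne
  rw [mem_coe] at hY hY'
  have h := mem_powersetCard.1 hY
  have h' := mem_powersetCard.1 hY'
  exact edgesIn_pairGraph_ne_of_phiNe h𝒮 hZX hsmall hY hY'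
    (hinj Y Y' (h.1.trans hZX) (h'.1.trans hZX) h.2 h'.2 hne) heq

lemma exists_phiNe_of_edgesIn_pairGraph_ne (h𝒮 : ∀ S ∈ 𝒮, IsSplit X S) (hZX : Z ⊆ X)
    (hY : Y ⊆ Z) (hY' : Y' ⊆ Z) (hY3 : #Y = 3) (hY'3 : #Y' = 3)
    (h : edgesIn (pairGraph 𝒮 Z) Y ≠ edgesIn (pairGraph 𝒮 Z) Y') : ∃ S ∈ 𝒮, phiNe Y Y' S := by
  obtain ⟨p, hpE, hp⟩ : ∃ p ∈ pairGraph 𝒮 Z, ¬(p ⊆ Y ↔ p ⊆ Y') := by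
    by_contra! hc
    exact h (filter_congr hc)
  obtain ⟨⟨-, hp2⟩, hpT⟩ := mem_pairGraph.1 hpE
  exact (exists_mem_restrictSS_phiNe_iff h𝒮 hZX hY hY').1 ⟨_, hpT,
    (phiNe_pair_sdiff_iff hY hY').2 ((separatesBy_iff_of_card_eq_two hp2 hY3 hY'3).2 hp)⟩

end PairGraph

section Graphs

variable {Z m : Finset α} {E : Finset (Finset α)}

/-- Otherwise, writing `Z \ m = {u, v}`, the triples `m ∪ {u}` and `m ∪ {v}` contain the same
edges. -/
lemma exists_mem_ne_of_injOn_edgesIn_of_card_eq_four (hZ : #Z = 4)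
    (hinj : Set.InjOn (edgesIn E) (Z.powersetCard 3)) (hm : m ⊆ Z) (hm2 : #m = 2) :
    ∃ p ∈ E, p ≠ m ∧ p ≠ Z \ m := by
  obtain ⟨u, v, huv, huvm⟩ :=
    card_eq_two.1 (by rw [card_sdiff_of_subset hm]; omega : #(Z \ m) = 2)
  have hu := mem_sdiff.1 (huvm ▸ mem_insert_self u {v})
  have hv := mem_sdiff.1 (huvm ▸ mem_insert_of_mem (mem_singleton_self v))
  have hY (w) (hw : w ∈ Z ∧ w ∉ m) : insert w m ∈ (Z.powersetCard 3 : Set (Finset α)) := by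
    rw [mem_coe, mem_powersetCard, card_insert_of_notMem hw.2, hm2]
    exact ⟨insert_subset hw.1 hm, rfl⟩
  by_contra! hE
  have hne : insert u m ≠ insert v m := fun h => by
    have := h ▸ mem_insert_self v m
    rw [mem_insert] at this
    tauto
  refine hne (hinj (hY u hu) (hY v hv) (filter_congr fun p hp => ?_))
  by_cases hpm : p = m
  · simp only [hpm, subset_insert]
  · rw [hE p hp hpm, huvm]
    simp only [insert_subset_iff, mem_insert, singleton_subset_iff]
    tauto

lemma card_filter_card_edgesIn_le_choose {𝒴 : Finset (Finset α)}
    (hinj : Set.InjOn (edgesIn E) 𝒴) (k : ℕ) :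
    #{Y ∈ 𝒴 | #(edgesIn E Y) = k} ≤ (#E).choose k := by
  rw [← card_powersetCard]
  refine card_le_card_of_injOn (edgesIn E) (fun Y hY => ?_)
    (hinj.mono (coe_subset.2 (filter_subset _ _)))
  rw [mem_coe, mem_filter] at hY
  rw [mem_coe, mem_powersetCard]
  exact ⟨filter_subset _ _, hY.2⟩

lemma sum_card_edgesIn (hE : ∀ p ∈ E, p ⊆ Z ∧ #p = 2) :
    ∑ Y ∈ Z.powersetCard 3, #(edgesIn E Y) = #E * (#Z - 2) := by
  calc ∑ Y ∈ Z.powersetCard 3, #(edgesIn E Y)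
      = ∑ p ∈ E, #{Y ∈ Z.powersetCard 3 | p ⊆ Y} := by
        simp only [edgesIn, card_filter]
        exact sum_comm
    _ = ∑ p ∈ E, (#Z - 2) := sum_congr rfl fun p hp => by
        obtain ⟨hpZ, hp2⟩ := hE p hp
        rw [card_filter_powersetCard_subset p Z 3 hpZ (by omega), hp2, Nat.choose_one_right]
    _ = #E * (#Z - 2) := by rw [sum_const, smul_eq_mul]

/-- By injectivity at most one triple contains no edge and at most one triple contains exactly a
given single edge; all other triples contain at least two edges, while every edge lies in
`|Z| - 2` triples. -/
lemma two_mul_choose_le_of_injOn_edgesIn (hE : ∀ p ∈ E, p ⊆ Z ∧ #p = 2)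
    (hinj : Set.InjOn (edgesIn E) (Z.powersetCard 3)) :
    2 * (#Z).choose 3 ≤ #E * (#Z - 2) + #E + 2 := by
  have h0 := card_filter_card_edgesIn_le_choose hinj 0
  have h1 := card_filter_card_edgesIn_le_choose hinj 1
  rw [Nat.choose_zero_right] at h0
  rw [Nat.choose_one_right] at h1
  calc 2 * (#Z).choose 3 = ∑ Y ∈ Z.powersetCard 3, 2 := by
        rw [sum_const, card_powersetCard, smul_eq_mul, mul_comm]
    _ ≤ ∑ Y ∈ Z.powersetCard 3, (#(edgesIn E Y) + 2 * (if #(edgesIn E Y) = 0 then 1 else 0)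
          + (if #(edgesIn E Y) = 1 then 1 else 0)) :=
        sum_le_sum fun Y _ => by split_ifs <;> omega
    _ = ∑ Y ∈ Z.powersetCard 3, #(edgesIn E Y)
          + 2 * #{Y ∈ Z.powersetCard 3 | #(edgesIn E Y) = 0}
          + #{Y ∈ Z.powersetCard 3 | #(edgesIn E Y) = 1} := by
        rw [sum_add_distrib, sum_add_distrib, ← mul_sum, card_filter, card_filter]
    _ ≤ #E * (#Z - 2) + #E + 2 := by rw [sum_card_edgesIn hE]; omega

end Graphs

def HasTriangleIn (E : Finset (Finset α)) (Z : Finset α) : Prop :=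
  ∃ x ∈ Z, ∃ y ∈ Z, ∃ z ∈ Z, x ≠ y ∧ x ≠ z ∧ y ≠ z ∧ {x, y} ∈ E ∧ {x, z} ∈ E ∧ {y, z} ∈ E

section Triangles

variable {Z T p : Finset α} {E : Finset (Finset α)}

lemma eq_pair_of_subset_triple {a b c : α} (hp : #p = 2) (h : p ⊆ {a, b, c}) :
    p = {a, b} ∨ p = {a, c} ∨ p = {b, c} := by
  obtain ⟨x, y, hxy, rfl⟩ := card_eq_two.1 hp
  have hx := h (mem_insert_self x {y})
  have hy := h (mem_insert_of_mem (mem_singleton_self y))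
  simp only [mem_insert, mem_singleton] at hx hy
  rcases hx with rfl | rfl | rfl <;> rcases hy with rfl | rfl | rfl <;>
    simp_all [pair_comm]

lemma edgesIn_triple_eq_empty_iff (hE : ∀ p ∈ E, #p = 2) {a b c : α} :
    edgesIn E {a, b, c} = ∅ ↔ {a, b} ∉ E ∧ {a, c} ∉ E ∧ {b, c} ∉ E := by
  rw [edgesIn, filter_eq_empty_iff]
  constructor
  · intro h
    refine ⟨fun hp => h hp ?_, fun hp => h hp ?_, fun hp => h hp ?_⟩ <;>
      simp [insert_subset_iff]
  · rintro ⟨hab, hac, hbc⟩ p hp hsub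
    rcases eq_pair_of_subset_triple (hE p hp) hsub with rfl | rfl | rfl <;> contradiction

lemma triple_mem_powersetCard {a b c : α} (ha : a ∈ Z) (hb : b ∈ Z) (hc : c ∈ Z) (hab : a ≠ b)
    (hac : a ≠ c) (hbc : b ≠ c) : {a, b, c} ∈ Z.powersetCard 3 := by
  rw [mem_powersetCard, insert_subset_iff, insert_subset_iff, singleton_subset_iff]
  exact ⟨⟨ha, hb, hc⟩, card_eq_three.2 ⟨a, b, c, hab, hac, hbc, rfl⟩⟩

/-- A vertex `v` has three neighbours, which are pairwise non-adjacent, or three non-neighbours,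
two of which are non-adjacent and form an edgeless triple with `v`. -/
lemma exists_edgesIn_eq_empty (hE : ∀ p ∈ E, #p = 2) (hZ : 6 ≤ #Z)
    (htri : ¬HasTriangleIn E Z) : ∃ Y ∈ Z.powersetCard 3, edgesIn E Y = ∅ := by
  obtain ⟨v, hv⟩ := card_pos.1 (by omega : 0 < #Z)
  have hsplit := card_filter_add_card_filter_not (s := Z.erase v) (fun w => {v, w} ∈ E)
  rw [card_erase_of_mem hv] at hsplit
  rcases (by omega : 2 < #{w ∈ Z.erase v | {v, w} ∈ E} ∨ 2 < #{w ∈ Z.erase v | {v, w} ∉ E})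
    with hN | hM
  · obtain ⟨a, ha, b, hb, c, hc, hab, hac, hbc⟩ := two_lt_card.1 hN
    simp only [mem_filter, mem_erase] at ha hb hc
    refine ⟨{a, b, c}, triple_mem_powersetCard ha.1.2 hb.1.2 hc.1.2 hab hac hbc,
      (edgesIn_triple_eq_empty_iff hE).2 ⟨fun h => ?_, fun h => ?_, fun h => ?_⟩⟩
    · exact htri ⟨v, hv, a, ha.1.2, b, hb.1.2, ha.1.1.symm, hb.1.1.symm, hab, ha.2, hb.2, h⟩
    · exact htri ⟨v, hv, a, ha.1.2, c, hc.1.2, ha.1.1.symm, hc.1.1.symm, hac, ha.2, hc.2, h⟩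
    · exact htri ⟨v, hv, b, hb.1.2, c, hc.1.2, hb.1.1.symm, hc.1.1.symm, hbc, hb.2, hc.2, h⟩
  · obtain ⟨a, ha, b, hb, c, hc, hab, hac, hbc⟩ := two_lt_card.1 hM
    simp only [mem_filter, mem_erase] at ha hb hc
    have key {x y : α} (hx : (x ≠ v ∧ x ∈ Z) ∧ {v, x} ∉ E) (hy : (y ≠ v ∧ y ∈ Z) ∧ {v, y} ∉ E)
        (hxy : x ≠ y) (h : {x, y} ∉ E) : ∃ Y ∈ Z.powersetCard 3, edgesIn E Y = ∅ :=
      ⟨{v, x, y}, triple_mem_powersetCard hv hx.1.2 hy.1.2 hx.1.1.symm hy.1.1.symm hxy,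
        (edgesIn_triple_eq_empty_iff hE).2 ⟨hx.2, hy.2, h⟩⟩
    by_cases h₁ : {a, b} ∈ E
    · by_cases h₂ : {a, c} ∈ E
      · by_cases h₃ : {b, c} ∈ E
        · exact absurd ⟨a, ha.1.2, b, hb.1.2, c, hc.1.2, hab, hac, hbc, h₁, h₂, h₃⟩ htri
        · exact key hb hc hbc h₃
      · exact key ha hc hac h₂
    · exact key ha hb hab h₁

/-- If the complement of the edgeless triple `T` contains an edge `u₁u₂`, every `t ∈ T` misses
`u₁` or `u₂`, so two points of `T` miss the same `uᵢ` and form an edgeless triple with it. -/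
lemma exists_ne_edgesIn_eq_empty (hE : ∀ p ∈ E, #p = 2) (hZ : #Z = 6)
    (htri : ¬HasTriangleIn E Z) (hT : T ∈ Z.powersetCard 3) (hTE : edgesIn E T = ∅) :
    ∃ Y ∈ Z.powersetCard 3, Y ≠ T ∧ edgesIn E Y = ∅ := by
  rw [mem_powersetCard] at hT
  have hU : #(Z \ T) = 3 := by rw [card_sdiff_of_subset hT.1]; omega
  by_cases hUE : edgesIn E (Z \ T) = ∅
  · refine ⟨Z \ T, mem_powersetCard.2 ⟨sdiff_subset, hU⟩, fun h => ?_, hUE⟩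
    obtain ⟨t, ht⟩ := card_pos.1 (by omega : 0 < #T)
    exact (mem_sdiff.1 (h ▸ ht)).2 ht
  obtain ⟨p, hp⟩ := nonempty_iff_ne_empty.2 hUE
  rw [mem_edgesIn] at hp
  obtain ⟨u₁, u₂, hu, rfl⟩ := card_eq_two.1 (hE _ hp.1)
  have hu₁ := mem_sdiff.1 (hp.2 (mem_insert_self u₁ {u₂}))
  have hu₂ := mem_sdiff.1 (hp.2 (mem_insert_of_mem (mem_singleton_self u₂)))
  let f t := if {u₁, t} ∈ E then u₂ else u₁
  have hfE : ∀ t ∈ T, {f t, t} ∉ E := fun t ht => by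
    by_cases h : {u₁, t} ∈ E
    · simp only [f, h, if_true]
      have hne (u) (hu : u ∉ T) : u ≠ t := fun e => hu (e ▸ ht)
      exact fun h' => htri ⟨u₁, hu₁.1, u₂, hu₂.1, t, hT.1 ht, hu, hne u₁ hu₁.2, hne u₂ hu₂.2,
        hp.1, h, h'⟩
    · simp only [f, h, if_false, not_false_eq_true]
  have hf : Set.MapsTo f T ({u₁, u₂} : Finset α) := fun t _ => by
    simp only [f, mem_coe]; split_ifs <;> simp
  obtain ⟨t, ht, t', ht', htt', hft⟩ :=
    exists_ne_map_eq_of_card_lt_of_maps_to (by rw [card_pair hu, hT.2]; norm_num) hf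
  have hfZ : f t ∈ Z ∧ f t ∉ T := by simp only [f]; split_ifs <;> assumption
  refine ⟨{f t, t, t'}, triple_mem_powersetCard hfZ.1 (hT.1 ht) (hT.1 ht')
      (fun e => hfZ.2 (by rw [e]; exact ht)) (fun e => hfZ.2 (by rw [e]; exact ht')) htt',
    fun h => hfZ.2 (h ▸ mem_insert_self _ _),
    (edgesIn_triple_eq_empty_iff hE).2 ⟨hfE t ht, hft ▸ hfE t' ht', fun h => ?_⟩⟩
  exact eq_empty_iff_forall_notMem.1 hTE _
    (mem_edgesIn.2 ⟨h, insert_subset ht (singleton_subset_iff.2 ht')⟩)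

/-- Two distinct triples without edges exist in any triangle-free graph on six vertices (a
sharpening of `R(3,3) = 6`), and they have the same, empty, set of edges. -/
lemma hasTriangleIn_of_injOn_edgesIn (hE : ∀ p ∈ E, #p = 2) (hZ : #Z = 6)
    (hinj : Set.InjOn (edgesIn E) (Z.powersetCard 3)) : HasTriangleIn E Z := by
  by_contra htri
  obtain ⟨T, hT, hTE⟩ := exists_edgesIn_eq_empty hE hZ.ge htri
  obtain ⟨Y, hY, hYT, hYE⟩ := exists_ne_edgesIn_eq_empty hE hZ htri hT hTE
  exact hYT (hinj hY hT (hYE.trans hTE.symm))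

end Triangles

section Dicing

variable {X Z p : Finset α} {𝒮 : Finset (Finset (Finset α))}

lemma isRSplit_two_of_mem_pairGraph (hp : p ∈ pairGraph 𝒮 Z) (hZ : 4 ≤ #Z) :
    IsRSplit Z 2 {p, Z \ p} := by
  obtain ⟨⟨hpZ, hp2⟩, -⟩ := mem_pairGraph.1 hp
  exact isRSplit_pair_sdiff hpZ (by norm_num) hp2 (by rw [card_sdiff_of_subset hpZ]; omega)

lemma fourDices_of_injective (h𝒮 : ∀ S ∈ 𝒮, IsSplit X S) (hinj : IsInjective X 𝒮) :
    FourDices X 𝒮 := by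
  refine Or.inr fun Z hZX hZ => ?_
  have hE := injOn_edgesIn_pairGraph h𝒮 hinj hZX
    fun _ => exists_card_le_two_of_card_le_five h𝒮 hZX (by omega)
  obtain ⟨m, hmZ, hm⟩ := exists_subset_card_eq (by omega : 2 ≤ #Z)
  obtain ⟨p, hp, -⟩ := exists_mem_ne_of_injOn_edgesIn_of_card_eq_four hZ hE hmZ hm
  obtain ⟨⟨hpZ, hp2⟩, hpS⟩ := mem_pairGraph.1 hp
  obtain ⟨q, hq, hqp, hqp'⟩ := exists_mem_ne_of_injOn_edgesIn_of_card_eq_four hZ hE hpZ hp2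
  have hne : ({p, Z \ p} : Finset (Finset α)) ≠ {q, Z \ q} := fun h => by
    have := h ▸ mem_insert_self q {Z \ q}
    rw [mem_insert, mem_singleton] at this
    tauto
  refine ⟨{{p, Z \ p}, {q, Z \ q}}, ?_, by rw [card_pair hne], ?_⟩
  · rw [insert_subset_iff, singleton_subset_iff]
    exact ⟨hpS, (mem_pairGraph.1 hq).2⟩
  · simp only [mem_insert, mem_singleton]
    rintro T (rfl | rfl)
    exacts [isRSplit_two_of_mem_pairGraph hp hZ.ge, isRSplit_two_of_mem_pairGraph hq hZ.ge]

lemma fiveDices_of_injective (h𝒮 : ∀ S ∈ 𝒮, IsSplit X S) (hinj : IsInjective X 𝒮) :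
    FiveDices X 𝒮 := by
  refine Or.inr fun Z hZX hZ => ?_
  have hcount := two_mul_choose_le_of_injOn_edgesIn (fun p hp => (mem_pairGraph.1 hp).1)
    (injOn_edgesIn_pairGraph h𝒮 hinj hZX fun _ => exists_card_le_two_of_card_le_five h𝒮 hZX hZ.le)
  rw [hZ, show (5 : ℕ).choose 3 = 10 by rfl] at hcount
  have hinjOn : Set.InjOn (fun p => ({p, Z \ p} : Finset (Finset α))) (pairGraph 𝒮 Z) := by
    intro p hp q hq (h : ({p, Z \ p} : Finset (Finset α)) = {q, Z \ q})
    obtain ⟨⟨-, hp2⟩, -⟩ := mem_pairGraph.1 hp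
    obtain ⟨⟨hqZ, hq2⟩, -⟩ := mem_pairGraph.1 hq
    have := h ▸ mem_insert_self p {Z \ p}
    rcases mem_insert.1 this with h' | h'
    · exact h'
    · have := congrArg card (mem_singleton.1 h')
      rw [card_sdiff_of_subset hqZ] at this
      omega
  refine ⟨(pairGraph 𝒮 Z).image fun p => {p, Z \ p}, ?_, ?_, ?_⟩
  · intro T hT
    obtain ⟨p, hp, rfl⟩ := mem_image.1 hT
    exact (mem_pairGraph.1 hp).2
  · rw [card_image_of_injOn hinjOn]
    omega
  · intro T hT
    obtain ⟨p, hp, rfl⟩ := mem_image.1 hT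
    exact isRSplit_two_of_mem_pairGraph hp (by omega)

lemma sixDices_of_injective (h𝒮 : ∀ S ∈ 𝒮, IsSplit X S) (hinj : IsInjective X 𝒮) :
    SixDices X 𝒮 := by
  refine Or.inr fun Z hZX hZ => or_iff_not_imp_left.2 fun h3 => ?_
  obtain ⟨x, hx, y, hy, z, hz, hxy, hxz, hyz, hxyE, hxzE, hyzE⟩ :=
    hasTriangleIn_of_injOn_edgesIn (fun p hp => (mem_pairGraph.1 hp).1.2) hZ
      (injOn_edgesIn_pairGraph h𝒮 hinj hZX fun T hT =>
        exists_card_le_two_of_not_isRSplit_three h𝒮 hZX hZ hT fun h => h3 ⟨T, hT, h⟩)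
  exact ⟨x, hx, y, hy, z, hz, hxy, hxz, hyz, (mem_pairGraph.1 hxyE).2, (mem_pairGraph.1 hxzE).2,
    (mem_pairGraph.1 hyzE).2⟩

end Dicing

section Distinguishing

variable {X Y Y' : Finset α} {𝒮 : Finset (Finset (Finset α))}

lemma exists_phiNe_of_fourDices (h𝒮 : ∀ S ∈ 𝒮, IsSplit X S) (hF : FourDices X 𝒮)
    (hYX : Y ⊆ X) (hY'X : Y' ⊆ X) (hY : #Y = 3) (hY' : #Y' = 3) (hZ : #(Y ∪ Y') = 4) :
    ∃ S ∈ 𝒮, phiNe Y Y' S := by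
  have hm : #(Y ∩ Y') = 2 := by have := card_union_add_card_inter Y Y'; omega
  set Z := Y ∪ Y'
  have hZX : Z ⊆ X := union_subset hYX hY'X
  obtain ⟨𝒯, h𝒯, h𝒯2, h𝒯r⟩ := hF.resolve_left (by have := card_le_card hZX; omega) Z hZX hZ
  refine exists_phiNe_of_edgesIn_pairGraph_ne h𝒮 hZX subset_union_left subset_union_right hY hY'
    fun heq => ?_
  -- a 2-split of `Z` has a part `q ⊆ Y`; as `q` is an edge, also `q ⊆ Y'`, so `q = Y ∩ Y'`
  have hT : ∀ T ∈ 𝒯, T = {Y ∩ Y', Z \ (Y ∩ Y')} := by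
    intro T hT
    obtain ⟨p, hpT, hp2⟩ := (h𝒯r T hT).2.1
    obtain ⟨hpZ, hTp⟩ := eq_pair_sdiff_of_mem_restrictSS h𝒮 hZX (h𝒯 hT) hpT
    have hp2' : #(Z \ p) = 2 := by rw [card_sdiff_of_subset hpZ]; omega
    obtain ⟨q, hqT, hq2, hqY⟩ : ∃ q ∈ T, #q = 2 ∧ q ⊆ Y := by
      have := card_inter_add_card_sdiff Y p
      by_cases h : 2 ≤ #(Y ∩ p)
      · exact ⟨p, hpT, hp2, (subset_iff_two_le_card_inter hp2).2 h⟩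
      · refine ⟨Z \ p, hTp ▸ mem_insert_of_mem (mem_singleton_self _), hp2',
          (subset_iff_two_le_card_inter hp2').2 ?_⟩
        rw [inter_sdiff_of_subset subset_union_left]
        omega
    have hqE := mem_pairGraph_of_mem_restrictSS h𝒮 hZX (h𝒯 hT) hqT hq2
    have hqY' : q ⊆ Y' := (mem_edgesIn.1 (heq ▸ mem_edgesIn.2 ⟨hqE, hqY⟩)).2
    have hq : q = Y ∩ Y' := eq_of_subset_of_card_le (subset_inter hqY hqY') (by omega)
    exact hq ▸ (eq_pair_sdiff_of_mem_restrictSS h𝒮 hZX (h𝒯 hT) hqT).2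
  have := card_le_one.2 fun T₁ h₁ T₂ h₂ => (hT T₁ h₁).trans (hT T₂ h₂).symm
  omega

lemma exists_phiNe_of_fiveDices (h𝒮 : ∀ S ∈ 𝒮, IsSplit X S) (hF : FiveDices X 𝒮)
    (hYX : Y ⊆ X) (hY'X : Y' ⊆ X) (hY : #Y = 3) (hY' : #Y' = 3) (hZ : #(Y ∪ Y') = 5) :
    ∃ S ∈ 𝒮, phiNe Y Y' S := by
  have hm : #(Y ∩ Y') = 1 := by have := card_union_add_card_inter Y Y'; omega
  set Z := Y ∪ Y'
  have hZX : Z ⊆ X := union_subset hYX hY'X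
  obtain ⟨𝒯, h𝒯, h𝒯5, h𝒯r⟩ := hF.resolve_left (by have := card_le_card hZX; omega) Z hZX hZ
  refine exists_phiNe_of_edgesIn_pairGraph_ne h𝒮 hZX subset_union_left subset_union_right hY hY'
    fun heq => ?_
  -- an edge cannot lie in `Y ∩ Y'`, so the 2-part of every split in `𝒯` crosses `Y` and `Y'`
  have h𝒯sub : 𝒯 ⊆ ((Y \ Y') ×ˢ (Y' \ Y)).image fun st => {{st.1, st.2}, Z \ {st.1, st.2}} := by
    intro T hT
    obtain ⟨p, hpT, hp2⟩ := (h𝒯r T hT).2.1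
    obtain ⟨hpZ, rfl⟩ := eq_pair_sdiff_of_mem_restrictSS h𝒮 hZX (h𝒯 hT) hpT
    have hpE := mem_pairGraph_of_mem_restrictSS h𝒮 hZX (h𝒯 hT) hpT hp2
    have hiff : p ⊆ Y ↔ p ⊆ Y' := by
      have := congrArg (p ∈ ·) heq
      simpa only [mem_edgesIn, hpE, true_and, eq_iff_iff] using this
    have hpY : ¬p ⊆ Y := fun h => by
      have := card_le_card (subset_inter h (hiff.1 h))
      omega
    obtain ⟨s, hsp, hsY'⟩ := not_subset.1 (hiff.not.1 hpY)
    obtain ⟨t, htp, htY⟩ := not_subset.1 hpY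
    have hs : s ∈ Y \ Y' := mem_sdiff.2 ⟨(mem_union.1 (hpZ hsp)).resolve_right hsY', hsY'⟩
    have ht : t ∈ Y' \ Y := mem_sdiff.2 ⟨(mem_union.1 (hpZ htp)).resolve_left htY, htY⟩
    have hst : s ≠ t := fun e => htY (e ▸ (mem_sdiff.1 hs).1)
    have hp : {s, t} = p :=
      eq_of_subset_of_card_le (insert_subset hsp (singleton_subset_iff.2 htp))
        (by rw [hp2, card_pair hst])
    exact mem_image.2 ⟨(s, t), mem_product.2 ⟨hs, ht⟩, by rw [hp]⟩
  have hcross : #(Y \ Y') = 2 ∧ #(Y' \ Y) = 2 := by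
    have := card_sdiff_add_card_inter Y Y'
    have := card_sdiff_add_card_inter Y' Y
    rw [inter_comm] at this
    omega
  have := (card_le_card h𝒯sub).trans card_image_le
  rw [card_product, hcross.1, hcross.2] at this
  omega

lemma exists_phiNe_of_sixDices (h𝒮 : ∀ S ∈ 𝒮, IsSplit X S) (hF : SixDices X 𝒮)
    (hYX : Y ⊆ X) (hY'X : Y' ⊆ X) (hY : #Y = 3) (hY' : #Y' = 3) (hZ : #(Y ∪ Y') = 6) :
    ∃ S ∈ 𝒮, phiNe Y Y' S := by
  have hdisj : Disjoint Y Y' := by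
    rw [disjoint_iff_inter_eq_empty, ← card_eq_zero]
    have := card_union_add_card_inter Y Y'
    omega
  set Z := Y ∪ Y'
  have hZX : Z ⊆ X := union_subset hYX hY'X
  rcases hF.resolve_left (by have := card_le_card hZX; omega) Z hZX hZ with
    ⟨T, hT, h3⟩ | ⟨x, hx, y, hy, z, hz, hxy, hxz, hyz, hxyS, hxzS, hyzS⟩
  · obtain ⟨B, hBT, hB3⟩ := h3.2.1
    obtain ⟨hBZ, rfl⟩ := eq_pair_sdiff_of_mem_restrictSS h𝒮 hZX hT hBT
    refine (exists_mem_restrictSS_phiNe_iff h𝒮 hZX subset_union_left subset_union_right).1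
      ⟨_, hT, (phiNe_pair_sdiff_iff subset_union_left subset_union_right).2 ?_⟩
    have hB : #(Y ∩ B) + #(Y' ∩ B) = 3 := by
      rw [← card_union_of_disjoint (hdisj.mono inter_subset_left inter_subset_left),
        ← union_inter_distrib_right, inter_eq_right.2 hBZ, hB3]
    have := card_inter_add_card_sdiff Y B
    have := card_inter_add_card_sdiff Y' B
    rw [SeparatesBy]
    omega
  · have key {a b : α} (ha : a ∈ Z) (hb : b ∈ Z) (hab : a ≠ b)
        (hS : {{a, b}, Z \ {a, b}} ∈ restrictSS 𝒮 Z) (hsame : a ∈ Y ↔ b ∈ Y) :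
        ∃ S ∈ 𝒮, phiNe Y Y' S := by
      have hpE : {a, b} ∈ pairGraph 𝒮 Z :=
        mem_pairGraph.2 ⟨⟨insert_subset ha (singleton_subset_iff.2 hb), card_pair hab⟩, hS⟩
      refine exists_phiNe_of_edgesIn_pairGraph_ne h𝒮 hZX subset_union_left subset_union_right
        hY hY' ?_
      have hmem {w : α} (hw : w ∈ Z) (hwY : w ∉ Y) : w ∈ Y' := (mem_union.1 hw).resolve_left hwY
      by_cases haY : a ∈ Y
      · exact edgesIn_ne_of_mem hpE (insert_subset haY (singleton_subset_iff.2 (hsame.1 haY)))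
          fun h => disjoint_left.1 hdisj haY (h (mem_insert_self a {b}))
      · exact (edgesIn_ne_of_mem hpE
          (insert_subset (hmem ha haY) (singleton_subset_iff.2 (hmem hb (hsame.not.1 haY))))
          fun h => haY (h (mem_insert_self a {b}))).symm
    rcases (by tauto : (x ∈ Y ↔ y ∈ Y) ∨ (x ∈ Y ↔ z ∈ Y) ∨ (y ∈ Y ↔ z ∈ Y)) with h | h | h
    exacts [key hx hy hxy hxyS h, key hx hz hxz hxzS h, key hy hz hyz hyzS h]

lemma injective_of_dices (h𝒮 : ∀ S ∈ 𝒮, IsSplit X S) (h4 : FourDices X 𝒮)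
    (h5 : FiveDices X 𝒮) (h6 : SixDices X 𝒮) : IsInjective X 𝒮 := by
  intro Y Y' hYX hY'X hY hY' hne
  have hinter : #(Y ∩ Y') ≠ 3 := fun h => hne <|
    (eq_of_subset_of_card_le inter_subset_left (by omega)).symm.trans
      (eq_of_subset_of_card_le inter_subset_right (by omega))
  have := card_union_add_card_inter Y Y'
  have := card_le_card (inter_subset_left : Y ∩ Y' ⊆ Y)
  rcases (by omega : #(Y ∪ Y') = 4 ∨ #(Y ∪ Y') = 5 ∨ #(Y ∪ Y') = 6) with h | h | h
  exacts [exists_phiNe_of_fourDices h𝒮 h4 hYX hY'X hY hY' h,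
    exists_phiNe_of_fiveDices h𝒮 h5 hYX hY'X hY hY' h,
    exists_phiNe_of_sixDices h𝒮 h6 hYX hY'X hY hY' h]

end Distinguishing

theorem statement12_general (X : Finset α)
    (𝒮 : Finset (Finset (Finset α))) (h𝒮 : IsSplitSystem X 𝒮) :
    IsInjective X 𝒮 ↔ FourDices X 𝒮 ∧ FiveDices X 𝒮 ∧ SixDices X 𝒮 :=
  ⟨fun h => ⟨fourDices_of_injective h𝒮.1 h, fiveDices_of_injective h𝒮.1 h,
      sixDices_of_injective h𝒮.1 h⟩,
    fun ⟨h4, h5, h6⟩ => injective_of_dices h𝒮.1 h4 h5 h6⟩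

/-- A split system `𝒮` on `X` (`|X| ≥ 3`) is injective iff `𝒮`
4-dices, 5-dices and 6-dices `X`. -/
theorem statement12 (X : Finset α) (hX : 3 ≤ X.card)
    (𝒮 : Finset (Finset (Finset α))) (h𝒮 : IsSplitSystem X 𝒮) :
    IsInjective X 𝒮 ↔ FourDices X 𝒮 ∧ FiveDices X 𝒮 ∧ SixDices X 𝒮 :=
  statement12_general X 𝒮 h𝒮

end InjectiveSplitSystems
end

section
/- Let 𝒮 be a split system on a finite set X with |X| ≥ 3. If 𝒮 is injective, then the restriction 𝒮|_Y is injective for every subset Y ⊆ X with |Y| ≥ 3. -/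
namespace InjectiveSplitSystems

open Finset

variable {α : Type*} [DecidableEq α]

/-! A split of `X` separating two triples `Z, Z' ⊆ Y` restricts to a split of `Y` separating
them: each of its two parts contains two points of `Z` or of `Z'`, hence meets `Y`, and the
restricted parts stay distinct because the original parts are disjoint. -/

theorem IsSplit.eq_pair_and_disjoint {X : Finset α} {S : Finset (Finset α)} {t t' : Finset α}
    (hS : IsSplit X S) (ht : t ∈ S) (ht' : t' ∈ S) (hne : t ≠ t') :
    S = {t, t'} ∧ Disjoint t t' := by
  obtain ⟨A, B, rfl, -, hAB, -, -⟩ := hS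
  rw [← disjoint_iff_inter_eq_empty] at hAB
  simp only [mem_insert, mem_singleton] at ht ht'
  rcases ht with rfl | rfl <;> rcases ht' with rfl | rfl
  · exact absurd rfl hne
  · exact ⟨rfl, hAB⟩
  · exact ⟨pair_comm _ _, hAB.symm⟩
  · exact absurd rfl hne

theorem inter_inter_eq_of_subset {Z Y : Finset α} (t : Finset α) (hZ : Z ⊆ Y) :
    Z ∩ (t ∩ Y) = Z ∩ t := by
  rw [inter_comm t, ← inter_assoc, inter_eq_left.2 hZ]

theorem nonempty_inter_of_two_le_card {Z Y t : Finset α} (hZ : Z ⊆ Y)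
    (h : 2 ≤ (Z ∩ t).card) : (t ∩ Y).Nonempty := by
  obtain ⟨a, ha⟩ := card_pos.1 (by omega : 0 < (Z ∩ t).card)
  exact ⟨a, mem_inter.2 ⟨(mem_inter.1 ha).2, hZ (mem_inter.1 ha).1⟩⟩

theorem IsSplit.phiNe_restrictSplit {X Y Z Z' : Finset α} {S : Finset (Finset α)}
    (hS : IsSplit X S) (hZ : Z ⊆ Y) (hZ' : Z' ⊆ Y) (h : phiNe Z Z' S) :
    (∀ u ∈ restrictSplit S Y, u ≠ ∅) ∧ phiNe Z Z' (restrictSplit S Y) := by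
  obtain ⟨t, ht, t', ht', hne, hZt, hZ't'⟩ := h
  obtain ⟨rfl, hdisj⟩ := hS.eq_pair_and_disjoint ht ht' hne
  have htY := nonempty_inter_of_two_le_card hZ hZt
  have ht'Y := nonempty_inter_of_two_le_card hZ' hZ't'
  refine ⟨?_, t ∩ Y, mem_image_of_mem _ ht, t' ∩ Y, mem_image_of_mem _ ht', ?_, ?_, ?_⟩
  · simp only [restrictSplit, image_insert, image_singleton, mem_insert, mem_singleton]
    rintro u (rfl | rfl)
    exacts [htY.ne_empty, ht'Y.ne_empty]
  · intro heq
    have hdisjY : Disjoint (t ∩ Y) (t' ∩ Y) := hdisj.mono inter_subset_left inter_subset_left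
    rw [heq, disjoint_self_iff_empty] at hdisjY
    exact ht'Y.ne_empty hdisjY
  · rwa [inter_inter_eq_of_subset t hZ]
  · rwa [inter_inter_eq_of_subset t' hZ']

theorem statement13_general (X : Finset α)
    (𝒮 : Finset (Finset (Finset α))) (h𝒮 : IsSplitSystem X 𝒮)
    (hinj : IsInjective X 𝒮) :
    ∀ Y ⊆ X, 3 ≤ Y.card → IsInjective Y (restrictSS 𝒮 Y) := by
  intro Y hYX _ Z Z' hZY hZ'Y hZ hZ' hne
  obtain ⟨S, hS𝒮, hsep⟩ := hinj Z Z' (hZY.trans hYX) (hZ'Y.trans hYX) hZ hZ' hne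
  obtain ⟨hparts, hsep'⟩ := (h𝒮.1 S hS𝒮).phiNe_restrictSplit hZY hZ'Y hsep
  exact ⟨restrictSplit S Y, mem_filter.2 ⟨mem_image_of_mem _ hS𝒮, hparts⟩, hsep'⟩

/-- If a split system `𝒮` on `X` (`|X| ≥ 3`) is injective, then the
restriction `𝒮|_Y` is injective for every `Y ⊆ X` with `|Y| ≥ 3`. -/
theorem statement13 (X : Finset α) (hX : 3 ≤ X.card)
    (𝒮 : Finset (Finset (Finset α))) (h𝒮 : IsSplitSystem X 𝒮)
    (hinj : IsInjective X 𝒮) :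
    ∀ Y ⊆ X, 3 ≤ Y.card → IsInjective Y (restrictSS 𝒮 Y) :=
  statement13_general X 𝒮 h𝒮 hinj

end InjectiveSplitSystems
end

section
/- For any two integers n and m with n ≥ m ≥ 3, the injective dimension satisfies ID(n) ≥ ID(m). -/
/-!
Restricting an injective split system on `{1, …, n}` to `Y = {1, …, m}` again gives an injective
split system: a split separating `φ_Y₁` from `φ_Y₂` keeps both parts nonempty on `Y`, since each
part contains two points of `Y₁` or `Y₂`. Restriction cannot raise the dimension, because
incompatible restricted splits come from incompatible splits, and distinct restricted splits from
distinct ones. The system of all splits is injective, so `ID(n)` is attained, and restricting a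
minimiser gives `ID(m) ≤ ID(n)`.
-/

namespace InjectiveSplitSystems

open Finset

variable {α : Type*} [DecidableEq α]

lemma IsSplit.eq_pair_of_ne {X : Finset α} {S : Finset (Finset α)} (hS : IsSplit X S)
    {t t' : Finset α} (ht : t ∈ S) (ht' : t' ∈ S) (htt' : t ≠ t') :
    S = {t, t'} ∧ Disjoint t t' := by
  obtain ⟨A, B, rfl, -, hAB, -, -⟩ := hS
  rw [← disjoint_iff_inter_eq_empty] at hAB
  simp only [mem_insert, mem_singleton] at ht ht'
  rcases ht with rfl | rfl <;> rcases ht' with rfl | rfl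
  · exact absurd rfl htt'
  · exact ⟨rfl, hAB⟩
  · exact ⟨pair_comm _ _, hAB.symm⟩
  · exact absurd rfl htt'

lemma isSplit_pair_sdiff {X A : Finset α} (hAX : A ⊆ X) (hA : A.Nonempty) (hAX' : A ≠ X) :
    IsSplit X {A, X \ A} :=
  ⟨A, X \ A, rfl, union_sdiff_of_subset hAX, inter_sdiff_self A X, hA.ne_empty,
    (sdiff_nonempty.mpr fun hXA => hAX' (hAX.antisymm hXA)).ne_empty⟩

lemma mem_restrictSS {𝒮 : Finset (Finset (Finset α))} {Y : Finset α} {T : Finset (Finset α)} :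
    T ∈ restrictSS 𝒮 Y ↔ (∃ S ∈ 𝒮, restrictSplit S Y = T) ∧ ∀ t ∈ T, t ≠ ∅ := by
  classical
  simp [restrictSS]

lemma restrictSplit_pair (A B Y : Finset α) :
    restrictSplit {A, B} Y = {A ∩ Y, B ∩ Y} := by
  simp [restrictSplit, image_insert]

lemma IsSplit.restrictSplit {X Y : Finset α} {S : Finset (Finset α)} (hS : IsSplit X S)
    (hYX : Y ⊆ X) (hne : ∀ t ∈ restrictSplit S Y, t ≠ ∅) : IsSplit Y (restrictSplit S Y) := by
  obtain ⟨A, B, rfl, hAB, hAB', -, -⟩ := hS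
  rw [restrictSplit_pair] at hne ⊢
  refine ⟨A ∩ Y, B ∩ Y, rfl, ?_, ?_, hne _ (by simp), hne _ (by simp)⟩
  · rw [← union_inter_distrib_right, hAB, inter_eq_right.mpr hYX]
  · rw [← disjoint_iff_inter_eq_empty] at hAB' ⊢
    exact hAB'.mono inter_subset_left inter_subset_left

lemma IsSplitSystem.restrictSS {X Y : Finset α} {𝒮 : Finset (Finset (Finset α))}
    (h𝒮 : IsSplitSystem X 𝒮) (hYX : Y ⊆ X) (hY : 2 ≤ Y.card) :
    IsSplitSystem Y (restrictSS 𝒮 Y) := by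
  refine ⟨fun T hT => ?_, fun x hx => mem_restrictSS.mpr ⟨⟨_, h𝒮.2 x (hYX hx), ?_⟩, ?_⟩⟩
  · obtain ⟨⟨S, hS, rfl⟩, hne⟩ := mem_restrictSS.mp hT
    exact (h𝒮.1 S hS).restrictSplit hYX hne
  · rw [restrictSplit_pair, inter_eq_left.mpr (singleton_subset_iff.mpr hx),
      sdiff_inter_right_comm, inter_eq_right.mpr hYX]
  · have hYx : (Y \ {x}).Nonempty := by
      rw [sdiff_singleton_eq_erase, ← card_pos, card_erase_of_mem hx]
      omega
    simpa using hYx.ne_empty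

lemma IsInjective.restrictSS {X Y : Finset α} {𝒮 : Finset (Finset (Finset α))}
    (h : IsInjective X 𝒮) (h𝒮 : ∀ S ∈ 𝒮, IsSplit X S) (hYX : Y ⊆ X) :
    IsInjective Y (restrictSS 𝒮 Y) := by
  intro Y₁ Y₂ hY₁ hY₂ hc₁ hc₂ hne
  obtain ⟨S, hS, t, ht, t', ht', htt', h₁, h₂⟩ :=
    h Y₁ Y₂ (hY₁.trans hYX) (hY₂.trans hYX) hc₁ hc₂ hne
  obtain ⟨rfl, hdisj⟩ := (h𝒮 _ hS).eq_pair_of_ne ht ht' htt'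
  have hY₁t : Y₁ ∩ (t ∩ Y) = Y₁ ∩ t := by
    rw [← inter_assoc, inter_right_comm, inter_eq_left.mpr hY₁]
  have hY₂t' : Y₂ ∩ (t' ∩ Y) = Y₂ ∩ t' := by
    rw [← inter_assoc, inter_right_comm, inter_eq_left.mpr hY₂]
  have htY : (t ∩ Y).Nonempty :=
    (card_pos.mp (by omega : 0 < (Y₁ ∩ t).card)).mono (hY₁t ▸ inter_subset_right)
  have ht'Y : (t' ∩ Y).Nonempty :=
    (card_pos.mp (by omega : 0 < (Y₂ ∩ t').card)).mono (hY₂t' ▸ inter_subset_right)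
  refine ⟨{t ∩ Y, t' ∩ Y}, mem_restrictSS.mpr ⟨⟨_, hS, restrictSplit_pair t t' Y⟩, ?_⟩,
    t ∩ Y, by simp, t' ∩ Y, by simp, ?_, hY₁t ▸ h₁, hY₂t' ▸ h₂⟩
  · simpa using ⟨htY.ne_empty, ht'Y.ne_empty⟩
  · intro hEq
    obtain ⟨a, ha⟩ := htY
    exact hdisj.forall_ne_finset (mem_inter.mp ha).1 (mem_inter.mp (hEq ▸ ha)).1 rfl

lemma Incompatible.of_restrictSplit {S S' : Finset (Finset α)} {Y : Finset α}
    (h : Incompatible (restrictSplit S Y) (restrictSplit S' Y)) : Incompatible S S' := by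
  refine ⟨fun hSS' => h.1 (hSS' ▸ rfl), fun A hA B hB hAB => ?_⟩
  refine h.2 _ (mem_image_of_mem _ hA) _ (mem_image_of_mem _ hB) ?_
  rw [inter_inter_inter_comm, hAB, empty_inter]

lemma card_le_dimSS {𝒮 𝒯 : Finset (Finset (Finset α))} (h𝒯𝒮 : 𝒯 ⊆ 𝒮)
    (h𝒯 : (𝒯 : Set (Finset (Finset α))).Pairwise Incompatible) : 𝒯.card ≤ dimSS 𝒮 := by
  classical
  exact le_sup (f := card) (mem_filter.mpr ⟨mem_powerset.mpr h𝒯𝒮, h𝒯⟩)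

lemma dimSS_le {𝒮 : Finset (Finset (Finset α))} {d : ℕ}
    (h : ∀ 𝒯 ⊆ 𝒮, (𝒯 : Set (Finset (Finset α))).Pairwise Incompatible → 𝒯.card ≤ d) :
    dimSS 𝒮 ≤ d := by
  classical
  refine Finset.sup_le fun 𝒯 h𝒯 => ?_
  obtain ⟨h𝒯𝒮, hinc⟩ := mem_filter.mp h𝒯
  exact h 𝒯 (mem_powerset.mp h𝒯𝒮) hinc

lemma dimSS_restrictSS_le (𝒮 : Finset (Finset (Finset α))) (Y : Finset α) :
    dimSS (restrictSS 𝒮 Y) ≤ dimSS 𝒮 := by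
  refine dimSS_le fun 𝒯 h𝒯𝒮 h𝒯 => ?_
  have hsurj : Set.SurjOn (restrictSplit · Y) (𝒮 : Set (Finset (Finset α))) 𝒯 :=
    fun T hT => (mem_restrictSS.mp (h𝒯𝒮 hT)).1
  obtain ⟨𝒰, h𝒰𝒮, hinj, rfl⟩ := exists_subset_injOn_image_eq_of_surjOn _ _ hsurj
  rw [card_image_of_injOn hinj]
  rw [coe_image, hinj.pairwise_image] at h𝒯
  exact card_le_dimSS h𝒰𝒮 (h𝒯.mono' fun _ _ => Incompatible.of_restrictSplit)

def allSplits (X : Finset α) : Finset (Finset (Finset α)) :=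
  (X.powerset.filter fun A => A.Nonempty ∧ A ≠ X).image fun A => {A, X \ A}

lemma pair_sdiff_mem_allSplits {X A : Finset α} (hAX : A ⊆ X) (hA : A.Nonempty)
    (hAX' : A ≠ X) : {A, X \ A} ∈ allSplits X :=
  mem_image_of_mem _ (mem_filter.mpr ⟨mem_powerset.mpr hAX, hA, hAX'⟩)

lemma isSplitSystem_allSplits {X : Finset α} (hX : 2 ≤ X.card) :
    IsSplitSystem X (allSplits X) := by
  refine ⟨fun S hS => ?_, fun x hx => ?_⟩
  · obtain ⟨A, hA, rfl⟩ := mem_image.mp hS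
    obtain ⟨hAX, hA, hAX'⟩ := mem_filter.mp hA
    exact isSplit_pair_sdiff (mem_powerset.mp hAX) hA hAX'
  · refine pair_sdiff_mem_allSplits (singleton_subset_iff.mpr hx) (singleton_nonempty x) ?_
    rintro rfl
    simp at hX

/-- Two distinct 3-sets are told apart by the 2-split cutting off two points of `Y`, one
of them outside `Y'`. -/
lemma isInjective_allSplits (X : Finset α) : IsInjective X (allSplits X) := by
  intro Y Y' hY hY' hc hc' hne
  obtain ⟨a, haY, haY'⟩ := not_subset.mp fun hYY' => hne (eq_of_subset_of_card_le hYY' (by omega))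
  obtain ⟨b, hb⟩ : (Y.erase a).Nonempty := by
    rw [← card_pos, card_erase_of_mem haY]
    omega
  have hab : ({a, b} : Finset α) ⊆ Y :=
    insert_subset haY (singleton_subset_iff.mpr (mem_of_mem_erase hb))
  have hY'ab : Y'.erase b ⊆ Y' ∩ (X \ {a, b}) := by
    intro c hc
    obtain ⟨hcb, hcY'⟩ := mem_erase.mp hc
    have hca : c ≠ a := fun h => haY' (h ▸ hcY')
    simp [hcY', hY' hcY', hca, hcb]
  have hcard : 2 ≤ (Y' ∩ (X \ {a, b})).card :=
    calc 2 ≤ Y'.card - 1 := by omega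
      _ ≤ (Y'.erase b).card := pred_card_le_card_erase
      _ ≤ _ := card_le_card hY'ab
  have hXab : (X \ {a, b}).Nonempty :=
    (card_pos.mp (by omega : 0 < (Y' ∩ (X \ {a, b})).card)).mono inter_subset_right
  refine ⟨{{a, b}, X \ {a, b}}, pair_sdiff_mem_allSplits (hab.trans hY) (insert_nonempty _ _)
    fun h => sdiff_nonempty.mp hXab h.ge, {a, b}, by simp, X \ {a, b}, by simp,
    disjoint_sdiff.ne (insert_nonempty a {b}).ne_empty, ?_, hcard⟩
  rw [inter_eq_right.mpr hab, card_pair (ne_of_mem_erase hb).symm]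

lemma exists_dimSS_eq_ID {n : ℕ} (hn : 2 ≤ n) :
    ∃ 𝒮 : Finset (Finset (Finset ℕ)), IsSplitSystem (Icc 1 n) 𝒮 ∧
      IsInjective (Icc 1 n) 𝒮 ∧ dimSS 𝒮 = ID n := by
  have hne : {d | ∃ 𝒮 : Finset (Finset (Finset ℕ)), IsSplitSystem (Icc 1 n) 𝒮 ∧
      IsInjective (Icc 1 n) 𝒮 ∧ dimSS 𝒮 = d}.Nonempty :=
    ⟨_, allSplits _, isSplitSystem_allSplits (by simpa using hn), isInjective_allSplits _, rfl⟩
  exact Nat.sInf_mem hne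

lemma ID_le_dimSS {n : ℕ} {𝒮 : Finset (Finset (Finset ℕ))} (h𝒮 : IsSplitSystem (Icc 1 n) 𝒮)
    (hinj : IsInjective (Icc 1 n) 𝒮) : ID n ≤ dimSS 𝒮 :=
  Nat.sInf_le ⟨𝒮, h𝒮, hinj, rfl⟩

/-- For integers `n ≥ m ≥ 3`, `ID(n) ≥ ID(m)`. -/
theorem statement14 (n m : ℕ) (hm : 3 ≤ m) (hmn : m ≤ n) : ID m ≤ ID n := by
  obtain ⟨𝒮, h𝒮, hinj, hdim⟩ := exists_dimSS_eq_ID (by omega : 2 ≤ n)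
  have hmn' : Icc 1 m ⊆ Icc 1 n := Icc_subset_Icc_right hmn
  calc ID m ≤ dimSS (restrictSS 𝒮 (Icc 1 m)) :=
        ID_le_dimSS (h𝒮.restrictSS hmn' (by rw [Nat.card_Icc]; omega)) (hinj.restrictSS h𝒮.1 hmn')
    _ ≤ dimSS 𝒮 := dimSS_restrictSS_le 𝒮 _
    _ = ID n := hdim

end InjectiveSplitSystems
end
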